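/- arXiv:2208.06329 — 7 statements merged into one kernel-verified Lean document; each statement's English description precedes it below -/
import Mathlib

section
/- Suppose the modular program signature is structurally valid. For all valid selections I₁ and I₂ and every j ∈ {1, …, n}, if siblings(I₁, I₂) = ∅ then I₁ ∩ impls(H_{1:j}) = I₂ ∩ impls(H_{1:j}); in particular (taking j = n), any two valid selections with no siblings are equal. -/
/-- `pars I` is the image of `par` on the finset `I` of implementations. -/
def pars {ι κ : Type*} [DecidableEq κ] (par : ι → κ) (I : Finset ι) : Finset κ :=
  I.image par

/-- `holesOf I` is the union of the holes referenced by the implementations in `I`. -/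
def holesOf {ι κ : Type*} [DecidableEq ι] [DecidableEq κ]
    (holes : ι → Finset κ) (I : Finset ι) : Finset κ :=
  I.biUnion holes

/-- `implsH h` is the finset of implementations of the hole `h`. -/
def implsH {ι κ : Type*} [Fintype ι] [DecidableEq κ] (par : ι → κ) (h : κ) : Finset ι :=
  Finset.univ.filter (fun i => par i = h)

/-- `implsHs H` is the finset of implementations of holes in `H`. -/
def implsHs {ι κ : Type*} [Fintype ι] [DecidableEq κ] (par : ι → κ) (H : Finset κ) : Finset ι :=
  Finset.univ.filter (fun i => par i ∈ H)

/-- `siblings I₁ I₂` is the finset of pairs of distinct implementations across `I₁`, `I₂`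
sharing a parent hole. -/
def siblings {ι κ : Type*} [DecidableEq ι] [DecidableEq κ]
    (par : ι → κ) (I₁ I₂ : Finset ι) : Finset (ι × ι) :=
  (I₁ ×ˢ I₂).filter (fun p => p.1 ≠ p.2 ∧ par p.1 = par p.2)

/-- A finset `I` of implementations is a valid selection. -/
def ValidSelection {ι κ : Type*} [DecidableEq ι] [DecidableEq κ]
    (par : ι → κ) (holes : ι → Finset κ) (baseHoles : Finset κ) (I : Finset ι) : Prop :=
  pars par I = baseHoles ∪ holesOf holes I ∧ siblings par I I = ∅

/-- The module dependency graph: vertices are implementations plus one base node (`none`);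
there is an edge `i₁ → i₂` whenever `par i₂ ∈ holes i₁`, and an edge `base → i₂`
whenever `par i₂ ∈ baseHoles`. -/
def MDG {ι κ : Type*} (par : ι → κ) (holes : ι → Finset κ) (baseHoles : Finset κ) :
    Option ι → Option ι → Prop
  | some i₁, some i₂ => par i₂ ∈ holes i₁
  | none, some i₂ => par i₂ ∈ baseHoles
  | _, none => False

/-- Structural validity of a modular program signature: the module dependency graph has
no directed cycle, and every hole has at least one implementation. -/
def StructValid {ι κ : Type*} [Fintype ι] [DecidableEq κ]
    (par : ι → κ) (holes : ι → Finset κ) (baseHoles : Finset κ) : Prop :=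
  Irreflexive (Relation.TransGen (MDG par holes baseHoles)) ∧
  ∀ h : κ, (implsH par h).Nonempty

/-- The hole dependency graph `G_Dep`: an edge `h₁ → h₂` iff some implementation of `h₁`
references `h₂`. -/
def GDep {ι κ : Type*} (par : ι → κ) (holes : ι → Finset κ) (h₁ h₂ : κ) : Prop :=
  ∃ i : ι, par i = h₁ ∧ h₂ ∈ holes i

/-- `Hs 1, …, Hs n` is an enumeration of all holes in a topological order of the hole
dependency graph. -/
def TopoEnum {ι κ : Type*} (par : ι → κ) (holes : ι → Finset κ) (n : ℕ) (Hs : ℕ → κ) : Prop :=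
  (∀ h : κ, ∃ j, 1 ≤ j ∧ j ≤ n ∧ Hs j = h) ∧
  (∀ j k, 1 ≤ j → j ≤ n → 1 ≤ k → k ≤ n → Hs j = Hs k → j = k) ∧
  (∀ j k, 1 ≤ j → j ≤ n → 1 ≤ k → k ≤ n → GDep par holes (Hs j) (Hs k) → j < k)

/-- `Hpre Hs j` is the finset `{H₁, …, H_j}` of the first `j` holes of the enumeration. -/
def Hpre {κ : Type*} [DecidableEq κ] (Hs : ℕ → κ) (j : ℕ) : Finset κ :=
  (Finset.Icc 1 j).image Hs

/-- Model prefixes without siblings are equal: for valid selections `I₁, I₂` with no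
siblings, the restrictions to the implementations of the first `j` holes agree for every
`j ∈ {1, …, n}`; in particular (taking `j = n`) `I₁ = I₂`. -/
theorem no_siblings_prefixes_equal {ι κ : Type*}
    [Fintype ι] [DecidableEq ι] [Fintype κ] [DecidableEq κ]
    (par : ι → κ) (holes : ι → Finset κ) (baseHoles : Finset κ)
    (hvalid : StructValid par holes baseHoles)
    (n : ℕ) (Hs : ℕ → κ) (htopo : TopoEnum par holes n Hs)
    (I₁ I₂ : Finset ι)
    (hI₁ : ValidSelection par holes baseHoles I₁)
    (hI₂ : ValidSelection par holes baseHoles I₂)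
    (hsib : siblings par I₁ I₂ = ∅) :
    (∀ j, 1 ≤ j → j ≤ n →
      I₁ ∩ implsHs par (Hpre Hs j) = I₂ ∩ implsHs par (Hpre Hs j)) ∧
    I₁ = I₂ := by
  obtain ⟨hcover, hinjE, horder⟩ := htopo
  have hcross : ∀ i₁ ∈ I₁, ∀ i₂ ∈ I₂, par i₁ = par i₂ → i₁ = i₂ := by
    intro i₁ h1 i₂ h2 hp
    by_contra hne
    have hmem : (i₁, i₂) ∈ siblings par I₁ I₂ := by
      simp [siblings, Finset.mem_filter, Finset.mem_product, h1, h2, hne, hp]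
    rw [hsib] at hmem
    exact absurd hmem (Finset.notMem_empty _)
  have main : ∀ j, j ≤ n →
      I₁ ∩ implsHs par (Hpre Hs j) = I₂ ∩ implsHs par (Hpre Hs j) := by
    intro j
    induction j with
    | zero => intro _; simp [Hpre, implsHs]
    | succ j ih =>
      intro hjn
      have hIH := ih (Nat.le_of_succ_le hjn)
      set h := Hs (j + 1) with hh
      have hkey : ∀ I : Finset ι, ValidSelection par holes baseHoles I →
          (h ∈ pars par I ↔ h ∈ baseHoles ∨
            ∃ i ∈ I ∩ implsHs par (Hpre Hs j), h ∈ holes i) := by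
        intro I hI
        rw [show (pars par I) = baseHoles ∪ holesOf holes I from hI.1, Finset.mem_union]
        constructor
        · rintro (hb | hhm)
          · exact Or.inl hb
          · right
            simp only [holesOf, Finset.mem_biUnion] at hhm
            obtain ⟨i, hiI, hih⟩ := hhm
            obtain ⟨k, hk1, hkn, hkeq⟩ := hcover (par i)
            have hgdep : GDep par holes (Hs k) (Hs (j + 1)) := ⟨i, hkeq.symm, hih⟩
            have hlt : k < j + 1 :=
              horder k (j + 1) hk1 hkn (Nat.le_add_left 1 j) hjn hgdep
            refine ⟨i, ?_, hih⟩
            simp only [Finset.mem_inter, implsHs, Finset.mem_filter, Finset.mem_univ,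
              true_and]
            refine ⟨hiI, ?_⟩
            exact Finset.mem_image.2 ⟨k, Finset.mem_Icc.2 ⟨hk1, Nat.lt_succ_iff.mp hlt⟩, hkeq⟩
        · rintro (hb | ⟨i, hi, hih⟩)
          · exact Or.inl hb
          · right
            simp only [Finset.mem_inter] at hi
            exact Finset.mem_biUnion.2 ⟨i, hi.1, hih⟩
      have hiff : h ∈ pars par I₁ ↔ h ∈ pars par I₂ := by
        rw [hkey I₁ hI₁, hkey I₂ hI₂, hIH]
      have hhole : I₁ ∩ implsH par h = I₂ ∩ implsH par h := by
        ext i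
        simp only [Finset.mem_inter, implsH, Finset.mem_filter, Finset.mem_univ, true_and]
        constructor
        · rintro ⟨hi1, hpi⟩
          have h2 : h ∈ pars par I₂ :=
            hiff.mp (Finset.mem_image.2 ⟨i, hi1, hpi⟩)
          obtain ⟨i₂, hi₂, hpi₂⟩ := Finset.mem_image.1 h2
          have : i = i₂ := hcross i hi1 i₂ hi₂ (by rw [hpi, hpi₂])
          exact ⟨this ▸ hi₂, hpi⟩
        · rintro ⟨hi2, hpi⟩
          have h1 : h ∈ pars par I₁ :=
            hiff.mpr (Finset.mem_image.2 ⟨i, hi2, hpi⟩)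
          obtain ⟨i₁, hi₁, hpi₁⟩ := Finset.mem_image.1 h1
          have : i₁ = i := hcross i₁ hi₁ i hi2 (by rw [hpi, hpi₁])
          exact ⟨this ▸ hi₁, hpi⟩
      have hins : Hpre Hs (j + 1) = insert h (Hpre Hs j) := by
        unfold Hpre
        rw [← Finset.insert_Icc_right_eq_Icc_add_one (Nat.succ_le_succ (Nat.zero_le j)), Finset.image_insert]
      have himpls : implsHs par (insert h (Hpre Hs j)) =
          implsH par h ∪ implsHs par (Hpre Hs j) := by
        ext i
        simp [implsHs, implsH, Finset.mem_insert]
      rw [hins, himpls, Finset.inter_union_distrib_left, Finset.inter_union_distrib_left,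
        hIH, hhole]
  refine ⟨fun j _ hjn => main j hjn, ?_⟩
  ext i
  have hmemHs : ∀ i' : ι, i' ∈ implsHs par (Hpre Hs n) := by
    intro i'
    obtain ⟨k, hk1, hkn, hkeq⟩ := hcover (par i')
    simp only [implsHs, Finset.mem_filter, Finset.mem_univ, true_and]
    exact Finset.mem_image.2 ⟨k, Finset.mem_Icc.2 ⟨hk1, hkn⟩, hkeq⟩
  have hn := main n le_rfl
  constructor
  · intro hi
    have : i ∈ I₁ ∩ implsHs par (Hpre Hs n) := Finset.mem_inter.2 ⟨hi, hmemHs i⟩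
    rw [hn] at this
    exact (Finset.mem_inter.1 this).1
  · intro hi
    have : i ∈ I₂ ∩ implsHs par (Hpre Hs n) := Finset.mem_inter.2 ⟨hi, hmemHs i⟩
    rw [← hn] at this
    exact (Finset.mem_inter.1 this).1
end

section
/- Suppose the modular program signature is structurally valid. For every j ∈ {1, …, n}, every valid selection I, every hole h ∈ (holes(I ∩ impls(H_{1:j})) ∪ baseHoles) \ H_{1:j}, and every implementation i ∈ impls(h), there exists a valid selection I' such that (I ∩ impls(H_{1:j})) ∪ {i} ⊆ I'. -/
section AuxChoose

variable {ι κ : Type*} [Fintype ι] [DecidableEq ι] [DecidableEq κ]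

/-- Auxiliary choice function: pick an implementation for each hole. -/
noncomputable def chooseImpl (par : ι → κ) (hex : ∀ h : κ, (implsH par h).Nonempty)
    (S : Finset ι) (i : ι) (h' : κ) : ι :=
  if h' = par i then i
  else if hc : ∃ x, x ∈ S ∧ par x = h' then hc.choose
  else (hex h').choose

lemma par_chooseImpl (par : ι → κ) (hex : ∀ h : κ, (implsH par h).Nonempty)
    (S : Finset ι) (i : ι) (h' : κ) : par (chooseImpl par hex S i h') = h' := by
  unfold chooseImpl
  split_ifs with h1 h2
  · exact h1.symm
  · exact h2.choose_spec.2
  · have := (hex h').choose_spec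
    simpa [implsH] using this

end AuxChoose

/-- Model prefixes can be expanded with any implementation: for every `j ∈ {1, …, n}`,
every valid selection `I`, every hole `h` in
`(holes(I ∩ impls(H_{1:j})) ∪ baseHoles) \ H_{1:j}`, and every implementation `i` of `h`,
there is a valid selection `I'` containing `(I ∩ impls(H_{1:j})) ∪ {i}`. -/

theorem prefix_expand_any_impl {ι κ : Type*}
    [Fintype ι] [DecidableEq ι] [Fintype κ] [DecidableEq κ]
    (par : ι → κ) (holes : ι → Finset κ) (baseHoles : Finset κ)
    (hvalid : StructValid par holes baseHoles)
    (n : ℕ) (Hs : ℕ → κ) (htopo : TopoEnum par holes n Hs)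
    (j : ℕ) (hj1 : 1 ≤ j) (hjn : j ≤ n)
    (I : Finset ι) (hI : ValidSelection par holes baseHoles I)
    (h : κ)
    (hh : h ∈ (holesOf holes (I ∩ implsHs par (Hpre Hs j)) ∪ baseHoles) \ Hpre Hs j)
    (i : ι) (hi : par i = h) :
    ∃ I' : Finset ι, ValidSelection par holes baseHoles I' ∧
      insert i (I ∩ implsHs par (Hpre Hs j)) ⊆ I' := by
  classical
  obtain ⟨hacyc, hex⟩ := hvalid
  obtain ⟨hsurj, hinje, hord⟩ := htopo
  obtain ⟨hpars, hsib⟩ := hI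
  set S : Finset ι := I ∩ implsHs par (Hpre Hs j) with hS
  -- h is not in the prefix
  have hnp : h ∉ Hpre Hs j := (Finset.mem_sdiff.mp hh).2
  have hhin : h ∈ holesOf holes S ∪ baseHoles := (Finset.mem_sdiff.mp hh).1
  set c : κ → ι := chooseImpl par hex S i with hc
  have pc : ∀ h', par (c h') = h' := fun h' => par_chooseImpl par hex S i h'
  have ch : c h = i := by
    simp [hc, chooseImpl, hi.symm]
  -- uniqueness of implementations within I
  have uniq : ∀ x ∈ I, ∀ y ∈ I, par x = par y → x = y := by
    intro x hx y hy hxy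
    by_contra hne
    have : (x, y) ∈ siblings par I I := by
      simp [siblings, Finset.mem_filter, hx, hy, hne, hxy]
    rw [hsib] at this
    simp at this
  -- membership in S
  have memS : ∀ x, x ∈ S ↔ x ∈ I ∧ par x ∈ Hpre Hs j := by
    intro x
    simp [hS, implsHs, Finset.mem_inter, Finset.mem_filter]
  -- c fixes elements of S
  have cS : ∀ x ∈ S, c (par x) = x := by
    intro x hxS
    have hxI : x ∈ I := ((memS x).mp hxS).1
    have hxp : par x ∈ Hpre Hs j := ((memS x).mp hxS).2
    have hne : par x ≠ par i := by
      rw [hi]; intro hcon; exact hnp (hcon ▸ hxp)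
    have hcex : ∃ y, y ∈ S ∧ par y = par x := ⟨x, hxS, rfl⟩
    have : c (par x) = hcex.choose := by
      simp [hc, chooseImpl, hne, hcex]
    rw [this]
    exact uniq _ ((memS _).mp hcex.choose_spec.1).1 _ hxI hcex.choose_spec.2
  -- the relation and the needed holes
  set R : κ → κ → Prop := fun a b => b ∈ holes (c a) with hR
  set Needed : κ → Prop := fun h' => ∃ b ∈ baseHoles, Relation.ReflTransGen R b h' with hN
  have Nbase : ∀ b ∈ baseHoles, Needed b := fun b hb => ⟨b, hb, Relation.ReflTransGen.refl⟩
  have Nstep : ∀ a, Needed a → ∀ b, b ∈ holes (c a) → Needed b := by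
    rintro a ⟨b0, hb0, hpath⟩ b hb
    exact ⟨b0, hb0, hpath.tail hb⟩
  have Ncases : ∀ a, Needed a → a ∈ baseHoles ∨ ∃ b, Needed b ∧ a ∈ holes (c b) := by
    rintro a ⟨b0, hb0, hpath⟩
    rcases hpath.cases_tail with rfl | ⟨m, hm, hma⟩
    · exact Or.inl hb0
    · exact Or.inr ⟨m, ⟨b0, hb0, hm⟩, hma⟩
  -- every hole of the prefix realized in I is needed (strong induction on index)
  have key : ∀ k, ∀ x ∈ S, par x = Hs k → 1 ≤ k → k ≤ j → Needed (par x) := by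
    intro k
    induction k using Nat.strong_induction_on with
    | _ k ih =>
      intro x hxS hpx hk1 hkj
      have hxI : x ∈ I := ((memS x).mp hxS).1
      have hmem : par x ∈ pars par I := Finset.mem_image_of_mem par hxI
      rw [hpars] at hmem
      rcases Finset.mem_union.mp hmem with hb | hho
      · exact Nbase _ hb
      · obtain ⟨y, hyI, hyh⟩ := Finset.mem_biUnion.mp hho
        obtain ⟨m, hm1, hmn, hmy⟩ := hsurj (par y)
        have hgd : GDep par holes (Hs m) (Hs k) := ⟨y, hmy.symm, hpx ▸ hyh⟩
        have hlt : m < k := hord m k hm1 hmn hk1 (hkj.trans hjn) hgd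
        have hmj : m ≤ j := le_trans (Nat.le_of_lt hlt) hkj
        have hyS : y ∈ S := by
          rw [memS]
          refine ⟨hyI, ?_⟩
          simp only [Hpre, Finset.mem_image]
          exact ⟨m, Finset.mem_Icc.mpr ⟨hm1, hmj⟩, hmy⟩
        have hNy : Needed (par y) := ih m hlt y hyS hmy.symm hm1 hmj
        exact Nstep _ hNy _ (by rw [cS y hyS]; exact hyh)
  have keyS : ∀ x ∈ S, Needed (par x) := by
    intro x hxS
    have hxp : par x ∈ Hpre Hs j := ((memS x).mp hxS).2
    simp only [Hpre, Finset.mem_image] at hxp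
    obtain ⟨k, hk, hkx⟩ := hxp
    rw [Finset.mem_Icc] at hk
    exact key k x hxS hkx.symm hk.1 hk.2
  -- h is needed
  have Nh : Needed h := by
    rcases Finset.mem_union.mp hhin with hho | hb
    · obtain ⟨x, hxS, hxh⟩ := Finset.mem_biUnion.mp hho
      exact Nstep _ (keyS x hxS) _ (by rw [cS x hxS]; exact hxh)
    · exact Nbase _ hb
  -- the new selection
  refine ⟨(Finset.univ.filter Needed).image c, ⟨?_, ?_⟩, ?_⟩
  · -- pars = baseHoles ∪ holesOf
    have hparsI' : pars par ((Finset.univ.filter Needed).image c)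
        = Finset.univ.filter Needed := by
      unfold pars
      rw [Finset.image_image]
      ext a
      simp only [Finset.mem_image, Finset.mem_filter, Finset.mem_univ, true_and,
        Function.comp_apply]
      constructor
      · rintro ⟨b, hb, rfl⟩; rwa [pc]
      · intro ha; exact ⟨a, ha, pc a⟩
    rw [hparsI']
    ext a
    simp only [Finset.mem_filter, Finset.mem_univ, true_and, Finset.mem_union, holesOf,
      Finset.mem_biUnion, Finset.mem_image]
    constructor
    · intro ha
      rcases Ncases a ha with hb | ⟨b, hNb, hab⟩
      · exact Or.inl hb
      · exact Or.inr ⟨c b, ⟨b, by simpa using hNb, rfl⟩, hab⟩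
    · rintro (hb | ⟨y, ⟨b, hNb, rfl⟩, hay⟩)
      · exact Nbase _ hb
      · exact Nstep _ (by simpa using hNb) _ hay
  · -- no siblings
    ext p
    simp only [siblings, Finset.mem_filter, Finset.mem_product, Finset.mem_image,
      Finset.mem_filter, Finset.mem_univ, true_and, Finset.notMem_empty, iff_false]
    rintro ⟨⟨⟨a, hNa, ha⟩, ⟨b, hNb, hb⟩⟩, hne, hpp⟩
    apply hne
    rw [← ha, ← hb] at hpp ⊢
    rw [pc, pc] at hpp
    rw [hpp]
  · -- containment
    intro x hx
    rcases Finset.mem_insert.mp hx with rfl | hxS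
    · refine Finset.mem_image.mpr ⟨h, ?_, ch⟩
      simpa using Nh
    · refine Finset.mem_image.mpr ⟨par x, ?_, cS x hxS⟩
      simpa using keyS x hxS
end

section
/- Suppose the modular program signature is structurally valid. For every j ∈ {1, …, n}, every pair (H', I_{j-1}) ∈ N_{j-1}, and every valid selection I' with I_{j-1} ⊆ I', one has I' ∩ impls(H_{1:j-1}) = I_{j-1} ∩ impls(H_{1:j-1}) (the algorithm's partial selections agree with any valid extension on all previously visited holes). -/
/-- `expand-node(H, I, h)`. -/
def expandNode {ι κ : Type*} [DecidableEq ι] [DecidableEq κ]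
    (par : ι → κ) (holes : ι → Finset κ) (H : Finset κ) (I : Finset ι) (h : κ) :
    Set (Finset κ × Finset ι) :=
  if h ∈ H then
    {p | ∃ i : ι, par i = h ∧ p = (H ∪ holes i, insert i I)}
  else {(H, I)}

/-- `new-edges(H, I, h)`. -/
def newEdges {ι κ : Type*} [DecidableEq ι] [DecidableEq κ]
    (par : ι → κ) (holes : ι → Finset κ) (H : Finset κ) (I : Finset ι) (h : κ) :
    Set (Finset κ × Finset ι × Finset κ × Finset ι) :=
  if h ∈ H then
    {q | ∃ i₁ i₂ : ι, par i₁ = h ∧ par i₂ = h ∧ i₁ ≠ i₂ ∧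
      q = (H ∪ holes i₁, insert i₁ I, H ∪ holes i₂, insert i₂ I)}
  else ∅

/-- `expand-edge(H₁, I₁, H₂, I₂, h)`. -/
def expandEdge {ι κ : Type*} [DecidableEq ι] [DecidableEq κ]
    (par : ι → κ) (holes : ι → Finset κ)
    (H₁ : Finset κ) (I₁ : Finset ι) (H₂ : Finset κ) (I₂ : Finset ι) (h : κ) :
    Set (Finset κ × Finset ι × Finset κ × Finset ι) :=
  if h ∈ H₁ then
    if h ∈ H₂ then
      {q | ∃ i : ι, par i = h ∧
        q = (H₁ ∪ holes i, insert i I₁, H₂ ∪ holes i, insert i I₂)}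
    else
      {q | ∃ i : ι, par i = h ∧ q = (H₁ ∪ holes i, insert i I₁, H₂, I₂)}
  else
    if h ∈ H₂ then
      {q | ∃ i : ι, par i = h ∧ q = (H₁, I₁, H₂ ∪ holes i, insert i I₂)}
    else {(H₁, I₁, H₂, I₂)}

/-- `expand(N, E, h)`. -/
def expand {ι κ : Type*} [DecidableEq ι] [DecidableEq κ]
    (par : ι → κ) (holes : ι → Finset κ)
    (NE : Set (Finset κ × Finset ι) × Set (Finset κ × Finset ι × Finset κ × Finset ι))
    (h : κ) :
    Set (Finset κ × Finset ι) × Set (Finset κ × Finset ι × Finset κ × Finset ι) :=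
  (⋃ p ∈ NE.1, expandNode par holes p.1 p.2 h,
   (⋃ p ∈ NE.1, newEdges par holes p.1 p.2 h) ∪
     ⋃ q ∈ NE.2, expandEdge par holes q.1 q.2.1 q.2.2.1 q.2.2.2 h)

/-- The model-graph algorithm: `(algo … j)` is the pair `(N_j, E_j)`, starting from
`(N₀, E₀) = ({(baseHoles, ∅)}, ∅)` and expanding on the hole `Hs j` at stage `j`. -/
def algo {ι κ : Type*} [DecidableEq ι] [DecidableEq κ]
    (par : ι → κ) (holes : ι → Finset κ) (baseHoles : Finset κ) (Hs : ℕ → κ) :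
    ℕ → Set (Finset κ × Finset ι) × Set (Finset κ × Finset ι × Finset κ × Finset ι)
  | 0 => ({(baseHoles, (∅ : Finset ι))}, ∅)
  | j + 1 => expand par holes (algo par holes baseHoles Hs j) (Hs (j + 1))

lemma nodes_inv {ι κ : Type*} [DecidableEq ι] [DecidableEq κ]
    (par : ι → κ) (holes : ι → Finset κ) (baseHoles : Finset κ) (Hs : ℕ → κ) :
    ∀ m (H : Finset κ) (I : Finset ι), (H, I) ∈ (algo par holes baseHoles Hs m).1 →
      H = baseHoles ∪ holesOf holes I := by
  intro m
  induction m with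
  | zero =>
    intro H I hm
    simp only [algo, Set.mem_singleton_iff, Prod.mk.injEq] at hm
    obtain ⟨h1, h2⟩ := hm
    subst h1; subst h2
    simp [holesOf]
  | succ m ih =>
    intro H I hm
    simp only [algo, expand, Set.mem_iUnion] at hm
    obtain ⟨⟨H₀, I₀⟩, hp, hmem⟩ := hm
    have hinv := ih H₀ I₀ hp
    unfold expandNode at hmem
    split at hmem
    · obtain ⟨i, hpar, heq⟩ := hmem
      have h1 : H = H₀ ∪ holes i := congrArg Prod.fst heq
      have h2 : I = insert i I₀ := congrArg Prod.snd heq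
      subst h1; subst h2; subst hinv
      ext x
      simp only [holesOf, Finset.biUnion_insert, Finset.mem_union]
      tauto
    · simp only [Set.mem_singleton_iff, Prod.mk.injEq] at hmem
      obtain ⟨h1, h2⟩ := hmem
      subst h1; subst h2; exact hinv

lemma algo_main {ι κ : Type*} [Fintype ι] [DecidableEq ι] [DecidableEq κ]
    (par : ι → κ) (holes : ι → Finset κ) (baseHoles : Finset κ)
    (n : ℕ) (Hs : ℕ → κ) (htopo : TopoEnum par holes n Hs) :
    ∀ m, m ≤ n → ∀ (H : Finset κ) (I : Finset ι),
      (H, I) ∈ (algo par holes baseHoles Hs m).1 →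
      ∀ I' : Finset ι, ValidSelection par holes baseHoles I' → I ⊆ I' →
      ∀ i', i' ∈ I' → par i' ∈ Hpre Hs m → i' ∈ I := by
  obtain ⟨hsurj, hinj, htop⟩ := htopo
  intro m
  induction m with
  | zero =>
    intro _ H I _ I' _ _ i' _ hpre
    simp [Hpre] at hpre
  | succ m ih =>
    intro hmn H I hm I' hI' hsub i' hi' hpre
    have hmn' : m ≤ n := Nat.le_of_succ_le hmn
    simp only [algo, expand, Set.mem_iUnion] at hm
    obtain ⟨⟨H₀, I₀⟩, hp, hmem⟩ := hm
    simp only [Hpre, Finset.mem_image, Finset.mem_Icc] at hpre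
    obtain ⟨k, ⟨hk1, hk2⟩, hkeq⟩ := hpre
    have hinv := nodes_inv par holes baseHoles Hs m H₀ I₀ hp
    unfold expandNode at hmem
    split at hmem
    case isTrue hin =>
      obtain ⟨i, hpar, heq⟩ := hmem
      have h1 : H = H₀ ∪ holes i := congrArg Prod.fst heq
      have h2 : I = insert i I₀ := congrArg Prod.snd heq
      subst h2
      have hI₀sub : I₀ ⊆ I' := fun x hx => hsub (Finset.mem_insert_of_mem hx)
      rcases Nat.lt_succ_iff_lt_or_eq.mp (Nat.lt_succ_of_le hk2) with hlt | heqk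
      · -- k ≤ m : apply IH
        have : par i' ∈ Hpre Hs m := by
          simp only [Hpre, Finset.mem_image, Finset.mem_Icc]
          exact ⟨k, ⟨hk1, Nat.lt_succ_iff.mp hlt⟩, hkeq⟩
        exact Finset.mem_insert_of_mem (ih hmn' H₀ I₀ hp I' hI' hI₀sub i' hi' this)
      · -- k = m+1 : par i' = Hs (m+1); use no-siblings
        have hii : i ∈ I' := hsub (Finset.mem_insert_self i I₀)
        have hpp : par i = par i' := by rw [hpar, ← hkeq, heqk]
        by_cases hie : i = i'
        · exact hie ▸ Finset.mem_insert_self i I₀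
        · exfalso
          have := hI'.2
          have hmem2 : (i, i') ∈ siblings par I' I' := by
            simp [siblings, Finset.mem_filter, Finset.mem_product]
            exact ⟨⟨hii, hi'⟩, hie, hpp⟩
          rw [this] at hmem2
          exact absurd hmem2 (Finset.notMem_empty _)
    case isFalse hnotin =>
      simp only [Set.mem_singleton_iff, Prod.mk.injEq] at hmem
      obtain ⟨h1, h2⟩ := hmem
      subst h1; subst h2
      rcases Nat.lt_succ_iff_lt_or_eq.mp (Nat.lt_succ_of_le hk2) with hlt | heqk
      · have : par i' ∈ Hpre Hs m := by
          simp only [Hpre, Finset.mem_image, Finset.mem_Icc]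
          exact ⟨k, ⟨hk1, Nat.lt_succ_iff.mp hlt⟩, hkeq⟩
        exact ih hmn' H I hp I' hI' hsub i' hi' this
      · -- par i' = Hs (m+1), but Hs (m+1) ∉ H = baseHoles ∪ holesOf I
        exfalso
        have hpari' : par i' = Hs (m + 1) := by rw [← hkeq, heqk]
        have hmemp : par i' ∈ pars par I' := Finset.mem_image_of_mem par hi'
        rw [hI'.1] at hmemp
        rcases Finset.mem_union.mp hmemp with hb | hh
        · exact hnotin (hinv ▸ Finset.mem_union_left _ (hpari' ▸ hb))
        · -- ∃ i'' ∈ I', Hs (m+1) ∈ holes i''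
          simp only [holesOf, Finset.mem_biUnion] at hh
          obtain ⟨i'', hi''I, hi''h⟩ := hh
          -- GDep (par i'') (Hs (m+1))
          obtain ⟨k'', hk''1, hk''n, hk''eq⟩ := hsurj (par i'')
          have hgdep : GDep par holes (Hs k'') (Hs (m + 1)) :=
            ⟨i'', hk''eq.symm, hpari' ▸ hi''h⟩
          have hklt : k'' < m + 1 := htop k'' (m + 1) hk''1 hk''n (Nat.succ_le_succ (Nat.zero_le m)) hmn hgdep
          have hpre'' : par i'' ∈ Hpre Hs m := by
            simp only [Hpre, Finset.mem_image, Finset.mem_Icc]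
            exact ⟨k'', ⟨hk''1, Nat.lt_succ_iff.mp hklt⟩, hk''eq⟩
          have : i'' ∈ I := ih hmn' H I hp I' hI' hsub i'' hi''I hpre''
          have : Hs (m + 1) ∈ holesOf holes I := by
            simp only [holesOf, Finset.mem_biUnion]
            exact ⟨i'', this, hpari' ▸ hi''h⟩
          exact hnotin (hinv ▸ Finset.mem_union_right _ this)

/-- Consistency: for `j ∈ {1, …, n}`, every pair `(H', I_{j-1}) ∈ N_{j-1}`, and every
valid selection `I'` extending `I_{j-1}`, `I'` agrees with `I_{j-1}` on the
implementations of all previously visited holes. -/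
theorem algo_prefix_consistency {ι κ : Type*}
    [Fintype ι] [DecidableEq ι] [Fintype κ] [DecidableEq κ]
    (par : ι → κ) (holes : ι → Finset κ) (baseHoles : Finset κ)
    (hvalid : StructValid par holes baseHoles)
    (n : ℕ) (Hs : ℕ → κ) (htopo : TopoEnum par holes n Hs)
    (j : ℕ) (hj1 : 1 ≤ j) (hjn : j ≤ n)
    (H' : Finset κ) (Iprev : Finset ι)
    (hmem : (H', Iprev) ∈ (algo par holes baseHoles Hs (j - 1)).1)
    (I' : Finset ι) (hI' : ValidSelection par holes baseHoles I')
    (hsub : Iprev ⊆ I') :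
    I' ∩ implsHs par (Hpre Hs (j - 1)) = Iprev ∩ implsHs par (Hpre Hs (j - 1)) := by
  ext x
  simp only [Finset.mem_inter]
  constructor
  · rintro ⟨hx, hxs⟩
    refine ⟨?_, hxs⟩
    have hpx : par x ∈ Hpre Hs (j - 1) := by
      simpa [implsHs] using hxs
    have hj1n : j - 1 ≤ n := le_trans (Nat.sub_le j 1) hjn
    exact algo_main par holes baseHoles n Hs htopo (j - 1) hj1n H' Iprev hmem I' hI' hsub x hx hpx
  · rintro ⟨hx, hxs⟩
    exact ⟨hsub hx, hxs⟩
end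

section
/- Suppose the modular program signature is structurally valid. For every j ∈ {1, …, n} and every pair (H_{j-1}, I_{j-1}) ∈ N_{j-1}: for every valid selection I' with I_{j-1} ⊆ I', one has pars(I') ∩ H_{1:j} = H_{j-1} ∩ H_{1:j} (model prefixes have complete prefix hole sets). -/
lemma mem_Hpre {κ : Type*} [DecidableEq κ] (Hs : ℕ → κ) (m : ℕ) (x : κ) :
    x ∈ Hpre Hs m ↔ ∃ k, 1 ≤ k ∧ k ≤ m ∧ Hs k = x := by
  simp [Hpre, Finset.mem_image, Finset.mem_Icc, and_assoc]

lemma Hpre_succ {κ : Type*} [DecidableEq κ] (Hs : ℕ → κ) (m : ℕ) :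
    Hpre Hs (m + 1) = insert (Hs (m + 1)) (Hpre Hs m) := by
  unfold Hpre
  rw [show Finset.Icc 1 (m + 1) = insert (m + 1) (Finset.Icc 1 m) by
    ext x; simp [Finset.mem_Icc]; omega, Finset.image_insert]

lemma holes_not_in_Hpre {ι κ : Type*} [DecidableEq κ]
    (par : ι → κ) (holes : ι → Finset κ) (n : ℕ) (Hs : ℕ → κ)
    (htopo : TopoEnum par holes n Hs) (m : ℕ) (hm1 : 1 ≤ m) (hmn : m ≤ n)
    (i : ι) (hpi : par i = Hs m) (x : κ) (hx : x ∈ holes i) :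
    x ∉ Hpre Hs m := by
  intro hxin
  obtain ⟨k, hk1, hkm, hkx⟩ := (mem_Hpre Hs m x).1 hxin
  obtain ⟨k', hk'1, hk'n, hk'x⟩ := htopo.1 x
  have hlt : m < k' := htopo.2.2 m k' hm1 hmn hk'1 hk'n ⟨i, hpi, hk'x ▸ hx⟩
  have : k = k' := htopo.2.1 k k' hk1 (le_trans hkm hmn) hk'1 hk'n (by rw [hkx, hk'x])
  omega

lemma algo_invariant {ι κ : Type*} [DecidableEq ι] [DecidableEq κ]
    (par : ι → κ) (holes : ι → Finset κ) (baseHoles : Finset κ)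
    (n : ℕ) (Hs : ℕ → κ) (htopo : TopoEnum par holes n Hs) :
    ∀ m, m ≤ n → ∀ H I, (H, I) ∈ (algo par holes baseHoles Hs m).1 →
      H = baseHoles ∪ holesOf holes I ∧ pars par I = H ∩ Hpre Hs m := by
  intro m
  induction m with
  | zero =>
    intro _ H I hmem
    simp only [algo, Set.mem_singleton_iff, Prod.mk.injEq] at hmem
    obtain ⟨rfl, rfl⟩ := hmem
    constructor
    · simp [holesOf]
    · simp [pars, Hpre]
  | succ m IH =>
    intro hmn H I hmem
    simp only [algo, expand, Set.mem_iUnion] at hmem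
    obtain ⟨⟨H₀, I₀⟩, h₀, hmem⟩ := hmem
    obtain ⟨hbase, hpars⟩ := IH (by omega) H₀ I₀ h₀
    by_cases hc : Hs (m + 1) ∈ H₀
    · simp only [expandNode, if_pos hc, Set.mem_setOf_eq, Prod.mk.injEq] at hmem
      obtain ⟨i, hpi, rfl, rfl⟩ := hmem
      constructor
      · rw [hbase]; ext x
        simp only [holesOf, Finset.biUnion_insert, Finset.mem_union]; tauto
      · have hdisj : ∀ x ∈ holes i, x ∉ Hpre Hs (m + 1) :=
          holes_not_in_Hpre par holes n Hs htopo (m + 1) (by omega) hmn i hpi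
        rw [pars, Finset.image_insert, ← pars, hpars, Hpre_succ]
        ext x
        simp only [Finset.mem_insert, Finset.mem_inter, Finset.mem_union]
        constructor
        · rintro (rfl | ⟨hx1, hx2⟩)
          · exact ⟨Or.inl (hpi ▸ hc), Or.inl hpi⟩
          · exact ⟨Or.inl hx1, Or.inr hx2⟩
        · rintro ⟨hx1 | hx1, hx2 | hx2⟩
          · exact Or.inl (hpi ▸ hx2)
          · exact Or.inr ⟨hx1, hx2⟩
          · exact Or.inl (hpi ▸ hx2)
          · exact absurd ((Hpre_succ Hs m) ▸ Finset.mem_insert_of_mem hx2)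
              (hdisj x hx1)
    · simp only [expandNode, if_neg hc, Set.mem_singleton_iff, Prod.mk.injEq] at hmem
      obtain ⟨rfl, rfl⟩ := hmem
      refine ⟨hbase, ?_⟩
      rw [hpars, Hpre_succ]
      ext x
      simp only [Finset.mem_inter, Finset.mem_insert]
      constructor
      · rintro ⟨hx1, hx2⟩; exact ⟨hx1, Or.inr hx2⟩
      · rintro ⟨hx1, rfl | hx2⟩
        · exact absurd hx1 hc
        · exact ⟨hx1, hx2⟩

/-- Model prefixes have complete prefix hole sets: for `j ∈ {1, …, n}`, every pair
`(H_{j-1}, I_{j-1}) ∈ N_{j-1}`, and every valid selection `I'` extending `I_{j-1}`,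
`pars(I') ∩ H_{1:j} = H_{j-1} ∩ H_{1:j}`. -/
theorem algo_prefix_holes_complete {ι κ : Type*}
    [Fintype ι] [DecidableEq ι] [Fintype κ] [DecidableEq κ]
    (par : ι → κ) (holes : ι → Finset κ) (baseHoles : Finset κ)
    (hvalid : StructValid par holes baseHoles)
    (n : ℕ) (Hs : ℕ → κ) (htopo : TopoEnum par holes n Hs)
    (j : ℕ) (hj1 : 1 ≤ j) (hjn : j ≤ n)
    (Hprev : Finset κ) (Iprev : Finset ι)
    (hmem : (Hprev, Iprev) ∈ (algo par holes baseHoles Hs (j - 1)).1)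
    (I' : Finset ι) (hI' : ValidSelection par holes baseHoles I')
    (hsub : Iprev ⊆ I') :
    pars par I' ∩ Hpre Hs j = Hprev ∩ Hpre Hs j := by
  have hjm : j - 1 ≤ n := by omega
  obtain ⟨hbase, hpars⟩ :=
    algo_invariant par holes baseHoles n Hs htopo (j - 1) hjm Hprev Iprev hmem
  -- Hprev ⊆ pars I'
  have hHprev_sub : Hprev ⊆ pars par I' := by
    rw [hbase, hI'.1]
    apply Finset.union_subset_union (le_refl _)
    intro x hx
    simp only [holesOf, Finset.mem_biUnion] at hx ⊢
    obtain ⟨i, hi, hxi⟩ := hx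
    exact ⟨i, hsub hi, hxi⟩
  -- key claim by strong induction on index
  have claim : ∀ m, ∀ i, i ∈ I' → 1 ≤ m → m ≤ j - 1 → Hs m = par i → i ∈ Iprev := by
    intro m
    induction m using Nat.strong_induction_on with
    | _ m IH =>
      intro i hi hm1 hmj hpar
      have hmemp : par i ∈ baseHoles ∪ holesOf holes I' := by
        rw [← hI'.1, pars]
        exact Finset.mem_image_of_mem par hi
      have hparHprev : par i ∈ Hprev := by
        rcases Finset.mem_union.1 hmemp with hb | hh
        · rw [hbase]; exact Finset.mem_union_left _ hb
        · simp only [holesOf, Finset.mem_biUnion] at hh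
          obtain ⟨i'', hi'', hxi''⟩ := hh
          obtain ⟨m'', hm''1, hm''n, hm''x⟩ := htopo.1 (par i'')
          have hlt : m'' < m := htopo.2.2 m'' m hm''1 hm''n hm1 (by omega)
            ⟨i'', hm''x.symm, hpar ▸ hxi''⟩
          have : i'' ∈ Iprev := IH m'' hlt i'' hi'' hm''1 (by omega) hm''x
          rw [hbase]
          exact Finset.mem_union_right _ (by
            simp only [holesOf, Finset.mem_biUnion]; exact ⟨i'', this, hxi''⟩)
      have : par i ∈ pars par Iprev := by
        rw [hpars]
        exact Finset.mem_inter.2 ⟨hparHprev,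
          (mem_Hpre Hs (j - 1) (par i)).2 ⟨m, hm1, hmj, hpar⟩⟩
      obtain ⟨i₀, hi₀, hpi₀⟩ := Finset.mem_image.1 this
      have heq : i₀ = i := by
        by_contra hne
        have : (i₀, i) ∈ siblings par I' I' := by
          simp only [siblings, Finset.mem_filter, Finset.mem_product]
          exact ⟨⟨hsub hi₀, hi⟩, hne, hpi₀⟩
        rw [hI'.2] at this
        exact absurd this (Finset.notMem_empty _)
      exact heq ▸ hi₀
  ext x
  simp only [Finset.mem_inter]
  constructor
  · rintro ⟨hx1, hx2⟩
    refine ⟨?_, hx2⟩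
    obtain ⟨i, hi, rfl⟩ := Finset.mem_image.1 hx1
    have hmemp : par i ∈ baseHoles ∪ holesOf holes I' := by
      rw [← hI'.1]; exact hx1
    rcases Finset.mem_union.1 hmemp with hb | hh
    · rw [hbase]; exact Finset.mem_union_left _ hb
    · simp only [holesOf, Finset.mem_biUnion] at hh
      obtain ⟨i'', hi'', hxi''⟩ := hh
      obtain ⟨m'', hm''1, hm''n, hm''x⟩ := htopo.1 (par i'')
      obtain ⟨k, hk1, hkj, hkx⟩ := (mem_Hpre Hs j (par i)).1 hx2
      have hlt : m'' < k := htopo.2.2 m'' k hm''1 hm''n hk1 (by omega)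
        ⟨i'', hm''x.symm, hkx ▸ hxi''⟩
      have : i'' ∈ Iprev := claim m'' i'' hi'' hm''1 (by omega) hm''x
      rw [hbase]
      exact Finset.mem_union_right _ (by
        simp only [holesOf, Finset.mem_biUnion]; exact ⟨i'', this, hxi''⟩)
  · rintro ⟨hx1, hx2⟩
    exact ⟨hHprev_sub hx1, hx2⟩
end

section
/- Suppose the modular program signature is structurally valid. For every j ∈ {0, 1, …, n} and every quadruple (H₁, I₁, H₂, I₂) ∈ E_j, both (H₁, I₁) ∈ N_j and (H₂, I₂) ∈ N_j (every edge prefix produced by the algorithm has both endpoints among the algorithm's node prefixes). -/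
lemma algo_aux {ι κ : Type*} [DecidableEq ι] [DecidableEq κ]
    (par : ι → κ) (holes : ι → Finset κ) (baseHoles : Finset κ) (Hs : ℕ → κ) :
    ∀ (j : ℕ) (H₁ : Finset κ) (I₁ : Finset ι) (H₂ : Finset κ) (I₂ : Finset ι),
      (H₁, I₁, H₂, I₂) ∈ (algo par holes baseHoles Hs j).2 →
      (H₁, I₁) ∈ (algo par holes baseHoles Hs j).1 ∧
      (H₂, I₂) ∈ (algo par holes baseHoles Hs j).1 := by
  intro j
  induction j with
  | zero => intro _ _ _ _ hm; exact absurd hm (Set.notMem_empty _)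
  | succ j ih =>
    intro H₁ I₁ H₂ I₂ hmem
    set h := Hs (j + 1) with hh
    -- helper: node membership in N_{j+1}
    have nodeStep : ∀ (H : Finset κ) (I : Finset ι),
        (H, I) ∈ (algo par holes baseHoles Hs j).1 →
        ∀ (H' : Finset κ) (I' : Finset ι),
          (H', I') ∈ expandNode par holes H I h →
          (H', I') ∈ (algo par holes baseHoles Hs (j + 1)).1 := by
      intro H I hHI H' I' hm
      show (H', I') ∈ ⋃ p ∈ (algo par holes baseHoles Hs j).1,
        expandNode par holes p.1 p.2 h
      exact Set.mem_biUnion hHI hm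
    rcases hmem with hm | hm
    · -- new edges
      rw [Set.mem_iUnion₂] at hm
      obtain ⟨p, hp, hq⟩ := hm
      unfold newEdges at hq
      by_cases hph : h ∈ p.1
      · rw [if_pos hph] at hq
        obtain ⟨i₁, i₂, hi₁, hi₂, hne, heq⟩ := hq
        simp only [Prod.ext_iff] at heq
        obtain ⟨e1, e2, e3, e4⟩ := heq
        constructor
        · refine nodeStep p.1 p.2 hp H₁ I₁ ?_
          unfold expandNode
          rw [if_pos hph]
          exact ⟨i₁, hi₁, by rw [e1, e2]⟩
        · refine nodeStep p.1 p.2 hp H₂ I₂ ?_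
          unfold expandNode
          rw [if_pos hph]
          exact ⟨i₂, hi₂, by rw [e3, e4]⟩
      · rw [if_neg hph] at hq
        exact absurd hq (Set.notMem_empty _)
    · -- expanded edges
      rw [Set.mem_iUnion₂] at hm
      obtain ⟨q, hq, hmq⟩ := hm
      obtain ⟨hq1, hq2⟩ := ih q.1 q.2.1 q.2.2.1 q.2.2.2 hq
      unfold expandEdge at hmq
      by_cases h1 : h ∈ q.1 <;> by_cases h2 : h ∈ q.2.2.1
      · rw [if_pos h1, if_pos h2] at hmq
        obtain ⟨i, hi, heq⟩ := hmq
        simp only [Prod.ext_iff] at heq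
        obtain ⟨e1, e2, e3, e4⟩ := heq
        constructor
        · exact nodeStep q.1 q.2.1 hq1 H₁ I₁
            (by unfold expandNode; rw [if_pos h1]; exact ⟨i, hi, by rw [e1, e2]⟩)
        · exact nodeStep q.2.2.1 q.2.2.2 hq2 H₂ I₂
            (by unfold expandNode; rw [if_pos h2]; exact ⟨i, hi, by rw [e3, e4]⟩)
      · rw [if_pos h1, if_neg h2] at hmq
        obtain ⟨i, hi, heq⟩ := hmq
        simp only [Prod.ext_iff] at heq
        obtain ⟨e1, e2, e3, e4⟩ := heq
        constructor
        · exact nodeStep q.1 q.2.1 hq1 H₁ I₁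
            (by unfold expandNode; rw [if_pos h1]; exact ⟨i, hi, by rw [e1, e2]⟩)
        · exact nodeStep q.2.2.1 q.2.2.2 hq2 H₂ I₂
            (by unfold expandNode; rw [if_neg h2]; simp [e3, e4])
      · rw [if_neg h1, if_pos h2] at hmq
        obtain ⟨i, hi, heq⟩ := hmq
        simp only [Prod.ext_iff] at heq
        obtain ⟨e1, e2, e3, e4⟩ := heq
        constructor
        · exact nodeStep q.1 q.2.1 hq1 H₁ I₁
            (by unfold expandNode; rw [if_neg h1]; simp [e1, e2])
        · exact nodeStep q.2.2.1 q.2.2.2 hq2 H₂ I₂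
            (by unfold expandNode; rw [if_pos h2]; exact ⟨i, hi, by rw [e3, e4]⟩)
      · rw [if_neg h1, if_neg h2] at hmq
        simp only [Set.mem_singleton_iff, Prod.ext_iff] at hmq
        obtain ⟨e1, e2, e3, e4⟩ := hmq
        constructor
        · exact nodeStep q.1 q.2.1 hq1 H₁ I₁
            (by unfold expandNode; rw [if_neg h1]; simp [e1, e2])
        · exact nodeStep q.2.2.1 q.2.2.2 hq2 H₂ I₂
            (by unfold expandNode; rw [if_neg h2]; simp [e3, e4])

/-- Edge prefix endpoints are model prefixes: for every `j ∈ {0, 1, …, n}` and every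
quadruple `(H₁, I₁, H₂, I₂) ∈ E_j`, both `(H₁, I₁)` and `(H₂, I₂)` are in `N_j`. -/
theorem algo_edge_endpoints_are_nodes {ι κ : Type*}
    [Fintype ι] [DecidableEq ι] [Fintype κ] [DecidableEq κ]
    (par : ι → κ) (holes : ι → Finset κ) (baseHoles : Finset κ)
    (hvalid : StructValid par holes baseHoles)
    (n : ℕ) (Hs : ℕ → κ) (htopo : TopoEnum par holes n Hs)
    (j : ℕ) (hjn : j ≤ n)
    (H₁ : Finset κ) (I₁ : Finset ι) (H₂ : Finset κ) (I₂ : Finset ι)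
    (hmem : (H₁, I₁, H₂, I₂) ∈ (algo par holes baseHoles Hs j).2) :
    (H₁, I₁) ∈ (algo par holes baseHoles Hs j).1 ∧
    (H₂, I₂) ∈ (algo par holes baseHoles Hs j).1 := by
  exact algo_aux par holes baseHoles Hs j H₁ I₁ H₂ I₂ hmem
end

section
/- Suppose the modular program signature is structurally valid. For every j ∈ {0, 1, …, n}: { (I₁ ∩ impls(H_{1:j}), I₂ ∩ impls(H_{1:j})) | I₁, I₂ valid selections, siblings(I₁, I₂) = {(i₁, i₂)} for some pair (i₁, i₂) with par(i₁) ∈ H_{1:j} } ⊆ { (I₁, I₂) | (H₁, I₁, H₂, I₂) ∈ E_j } (the algorithm's edge prefixes at stage j include every prefix of a model-graph edge whose differing hole has already been visited). -/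
section AuxMG
set_option linter.unusedSectionVars false
variable {ι κ : Type*} [Fintype ι] [DecidableEq ι] [DecidableEq κ]
variable (par : ι → κ) (holes : ι → Finset κ) (baseHoles : Finset κ)

/-- Prefix of a selection: implementations of already-visited holes. -/
def Pfx (Hs : ℕ → κ) (I : Finset ι) (m : ℕ) : Finset ι := I ∩ implsHs par (Hpre Hs m)

/-- Hole set accumulated along the prefix. -/
def Hst (Hs : ℕ → κ) (I : Finset ι) (m : ℕ) : Finset κ :=
  baseHoles ∪ holesOf holes (Pfx par Hs I m)

lemma hpre_succ (Hs : ℕ → κ) (m : ℕ) :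
    Hpre Hs (m+1) = insert (Hs (m+1)) (Hpre Hs m) := by
  unfold Hpre
  rw [← Finset.insert_Icc_right_eq_Icc_add_one (by omega), Finset.image_insert]

lemma mem_Pfx {Hs : ℕ → κ} {I : Finset ι} {m : ℕ} {i : ι} :
    i ∈ Pfx par Hs I m ↔ i ∈ I ∧ par i ∈ Hpre Hs m := by
  simp [Pfx, implsHs]

lemma Pfx_zero (Hs : ℕ → κ) (I : Finset ι) : Pfx par Hs I 0 = ∅ := by
  ext i; simp [mem_Pfx, Hpre]

lemma sib_unique {I : Finset ι} (hI : siblings par I I = ∅) {i i' : ι}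
    (hi : i ∈ I) (hi' : i' ∈ I) (hp : par i = par i') : i = i' := by
  by_contra hne
  have : (i, i') ∈ siblings par I I := by simp [siblings, hi, hi', hne, hp]
  simp [hI] at this

lemma cross_unique {I₁ I₂ : Finset ι} {i₁ i₂ : ι}
    (hsib : siblings par I₁ I₂ = {(i₁, i₂)}) {i i' : ι}
    (hi : i ∈ I₁) (hi' : i' ∈ I₂) (hp : par i = par i') (hne : par i ≠ par i₁) :
    i = i' := by
  by_contra h
  have : (i, i') ∈ siblings par I₁ I₂ := by simp [siblings, hi, hi', h, hp]
  rw [hsib] at this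
  simp at this
  exact hne (by rw [this.1])

lemma mem_pars {I : Finset ι} {h : κ} : h ∈ pars par I ↔ ∃ i ∈ I, par i = h := by
  simp [pars]


lemma idx_Hs (n : ℕ) (Hs : ℕ → κ) (idx : κ → ℕ)
    (hidx1 : ∀ h, 1 ≤ idx h) (hidx2 : ∀ h, idx h ≤ n) (hidx3 : ∀ h, Hs (idx h) = h)
    (hinj : ∀ j k, 1 ≤ j → j ≤ n → 1 ≤ k → k ≤ n → Hs j = Hs k → j = k) {m : ℕ} (h1 : 1 ≤ m) (h2 : m ≤ n) : idx (Hs m) = m :=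
  hinj _ _ (hidx1 _) (hidx2 _) h1 h2 (hidx3 _)

lemma mem_Hpre_s10 (n : ℕ) (Hs : ℕ → κ) (idx : κ → ℕ)
    (hidx1 : ∀ h, 1 ≤ idx h) (hidx2 : ∀ h, idx h ≤ n) (hidx3 : ∀ h, Hs (idx h) = h)
    (hinj : ∀ j k, 1 ≤ j → j ≤ n → 1 ≤ k → k ≤ n → Hs j = Hs k → j = k) {h : κ} {m : ℕ} (hm : m ≤ n) : h ∈ Hpre Hs m ↔ idx h ≤ m := by
  constructor
  · intro hh
    simp only [Hpre, Finset.mem_image, Finset.mem_Icc] at hh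
    obtain ⟨k, ⟨hk1, hk2⟩, hke⟩ := hh
    have := hinj (idx h) k (hidx1 _) (hidx2 _) hk1 (le_trans hk2 hm)
      (by rw [hidx3, hke])
    omega
  · intro hh
    simp only [Hpre, Finset.mem_image, Finset.mem_Icc]
    exact ⟨idx h, ⟨hidx1 _, hh⟩, hidx3 _⟩

lemma Pfx_step_none (Hs : ℕ → κ) {I : Finset ι} {m : ℕ} (hnot : Hs (m+1) ∉ pars par I) :
    Pfx par Hs I (m+1) = Pfx par Hs I m := by
  ext x
  simp only [mem_Pfx, hpre_succ, Finset.mem_insert]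
  constructor
  · rintro ⟨hxI, hx | hx⟩
    · exact absurd ((mem_pars par).mpr ⟨x, hxI, hx⟩) hnot
    · exact ⟨hxI, hx⟩
  · rintro ⟨hxI, hx⟩; exact ⟨hxI, Or.inr hx⟩

lemma Hst_step_none (Hs : ℕ → κ) {I : Finset ι} {m : ℕ} (hnot : Hs (m+1) ∉ pars par I) :
    Hst par holes baseHoles Hs I (m+1) = Hst par holes baseHoles Hs I m := by
  unfold Hst; rw [Pfx_step_none par Hs hnot]

lemma Pfx_step_some (Hs : ℕ → κ) {I : Finset ι} {m : ℕ} {i : ι} (hss : siblings par I I = ∅)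
    (hiI : i ∈ I) (hpi : par i = Hs (m+1)) :
    Pfx par Hs I (m+1) = insert i (Pfx par Hs I m) := by
  ext x
  simp only [mem_Pfx, hpre_succ, Finset.mem_insert]
  constructor
  · rintro ⟨hxI, hx | hx⟩
    · exact Or.inl (sib_unique par hss hxI hiI (by rw [hx, hpi]))
    · exact Or.inr ⟨hxI, hx⟩
  · rintro (rfl | ⟨hxI, hx⟩)
    · exact ⟨hiI, Or.inl hpi⟩
    · exact ⟨hxI, Or.inr hx⟩

lemma Hst_step_some (Hs : ℕ → κ) {I : Finset ι} {m : ℕ} {i : ι} (hss : siblings par I I = ∅)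
    (hiI : i ∈ I) (hpi : par i = Hs (m+1)) :
    Hst par holes baseHoles Hs I (m+1) = Hst par holes baseHoles Hs I m ∪ holes i := by
  unfold Hst
  rw [Pfx_step_some par Hs hss hiI hpi]
  ext x
  simp only [holesOf, Finset.biUnion_insert, Finset.mem_union]
  tauto

lemma stage_mem (n : ℕ) (Hs : ℕ → κ) (idx : κ → ℕ)
    (hidx1 : ∀ h, 1 ≤ idx h) (hidx2 : ∀ h, idx h ≤ n) (hidx3 : ∀ h, Hs (idx h) = h)
    (hinj : ∀ j k, 1 ≤ j → j ≤ n → 1 ≤ k → k ≤ n → Hs j = Hs k → j = k)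
    (hord : ∀ i : ι, ∀ h2 ∈ holes i, idx (par i) < idx h2) {I : Finset ι} {m : ℕ}
    (hIv : ValidSelection par holes baseHoles I) (hm : m + 1 ≤ n) :
    Hs (m+1) ∈ Hst par holes baseHoles Hs I m ↔ Hs (m+1) ∈ pars par I := by
  constructor
  · intro hmem
    rw [hIv.1]
    rcases Finset.mem_union.mp hmem with hb | hh
    · exact Finset.mem_union_left _ hb
    · refine Finset.mem_union_right _ ?_
      simp only [holesOf, Finset.mem_biUnion] at hh ⊢
      obtain ⟨x, hx, hgx⟩ := hh
      exact ⟨x, ((mem_Pfx par).mp hx).1, hgx⟩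
  · intro hmem
    rw [hIv.1] at hmem
    rcases Finset.mem_union.mp hmem with hb | hh
    · exact Finset.mem_union_left _ hb
    · refine Finset.mem_union_right _ ?_
      simp only [holesOf, Finset.mem_biUnion] at hh ⊢
      obtain ⟨x, hx, hgx⟩ := hh
      have hlt := hord x _ hgx
      rw [idx_Hs n Hs idx hidx1 hidx2 hidx3 hinj (by omega) hm] at hlt
      refine ⟨x, (mem_Pfx par).mpr ⟨hx, ?_⟩, hgx⟩
      exact (mem_Hpre_s10 n Hs idx hidx1 hidx2 hidx3 hinj (by omega)).mpr (by omega)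

lemma node_inv (n : ℕ) (Hs : ℕ → κ) (idx : κ → ℕ)
    (hidx1 : ∀ h, 1 ≤ idx h) (hidx2 : ∀ h, idx h ≤ n) (hidx3 : ∀ h, Hs (idx h) = h)
    (hinj : ∀ j k, 1 ≤ j → j ≤ n → 1 ≤ k → k ≤ n → Hs j = Hs k → j = k)
    (hord : ∀ i : ι, ∀ h2 ∈ holes i, idx (par i) < idx h2) {I : Finset ι} (hIv : ValidSelection par holes baseHoles I) :
    ∀ m, m ≤ n → (Hst par holes baseHoles Hs I m, Pfx par Hs I m)
      ∈ (algo par holes baseHoles Hs m).1 := by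
  intro m
  induction m with
  | zero =>
    intro _
    have h1 : Pfx par Hs I 0 = ∅ := Pfx_zero par Hs I
    have h2 : Hst par holes baseHoles Hs I 0 = baseHoles := by
      unfold Hst; rw [h1]; simp [holesOf]
    rw [h1, h2]
    simp [algo]
  | succ m ih =>
    intro hm
    have ihm := ih (by omega)
    show _ ∈ (expand par holes (algo par holes baseHoles Hs m) (Hs (m+1))).1
    refine Set.mem_iUnion₂.mpr
      ⟨(Hst par holes baseHoles Hs I m, Pfx par Hs I m), ihm, ?_⟩
    by_cases hp : Hs (m+1) ∈ pars par I
    · have hmemH : Hs (m+1) ∈ Hst par holes baseHoles Hs I m :=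
        (stage_mem par holes baseHoles n Hs idx hidx1 hidx2 hidx3 hinj hord hIv hm).mpr hp
      obtain ⟨i, hiI, hpi⟩ := (mem_pars par).mp hp
      unfold expandNode
      rw [if_pos hmemH]
      exact ⟨i, hpi, by
        rw [Hst_step_some par holes baseHoles Hs hIv.2 hiI hpi,
            Pfx_step_some par Hs hIv.2 hiI hpi]⟩
    · have hmemH : Hs (m+1) ∉ Hst par holes baseHoles Hs I m := fun hc => hp
        ((stage_mem par holes baseHoles n Hs idx hidx1 hidx2 hidx3 hinj hord hIv hm).mp hc)
      unfold expandNode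
      rw [if_neg hmemH]
      simp only [Set.mem_singleton_iff, Prod.mk.injEq]
      exact ⟨Hst_step_none par holes baseHoles Hs hp, Pfx_step_none par Hs hp⟩

lemma pars_transfer (n : ℕ) (Hs : ℕ → κ) (idx : κ → ℕ)
    (hidx1 : ∀ h, 1 ≤ idx h) (hidx2 : ∀ h, idx h ≤ n) (hidx3 : ∀ h, Hs (idx h) = h)
    (hinj : ∀ j k, 1 ≤ j → j ≤ n → 1 ≤ k → k ≤ n → Hs j = Hs k → j = k)
    (hord : ∀ i : ι, ∀ h2 ∈ holes i, idx (par i) < idx h2) {I₁ I₂ : Finset ι} {m : ℕ}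
    (hI1 : ValidSelection par holes baseHoles I₁)
    (hI2 : ValidSelection par holes baseHoles I₂)
    (hm : m + 1 ≤ n) (hagree : Pfx par Hs I₁ m = Pfx par Hs I₂ m)
    (hp : Hs (m+1) ∈ pars par I₁) : Hs (m+1) ∈ pars par I₂ := by
  rw [hI1.1] at hp
  rw [hI2.1]
  rcases Finset.mem_union.mp hp with hb | hh
  · exact Finset.mem_union_left _ hb
  · refine Finset.mem_union_right _ ?_
    simp only [holesOf, Finset.mem_biUnion] at hh ⊢
    obtain ⟨x, hx, hgx⟩ := hh
    have hlt := hord x _ hgx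
    rw [idx_Hs n Hs idx hidx1 hidx2 hidx3 hinj (by omega) hm] at hlt
    have hxP : x ∈ Pfx par Hs I₁ m := (mem_Pfx par).mpr
      ⟨hx, (mem_Hpre_s10 n Hs idx hidx1 hidx2 hidx3 hinj (by omega)).mpr (by omega)⟩
    rw [hagree] at hxP
    exact ⟨x, ((mem_Pfx par).mp hxP).1, hgx⟩

lemma pfx_agree (n : ℕ) (Hs : ℕ → κ) (idx : κ → ℕ)
    (hidx1 : ∀ h, 1 ≤ idx h) (hidx2 : ∀ h, idx h ≤ n) (hidx3 : ∀ h, Hs (idx h) = h)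
    (hinj : ∀ j k, 1 ≤ j → j ≤ n → 1 ≤ k → k ≤ n → Hs j = Hs k → j = k)
    (hord : ∀ i : ι, ∀ h2 ∈ holes i, idx (par i) < idx h2) {I₁ I₂ : Finset ι} {i₁ i₂ : ι}
    (hI1 : ValidSelection par holes baseHoles I₁)
    (hI2 : ValidSelection par holes baseHoles I₂)
    (hsib : siblings par I₁ I₂ = {(i₁, i₂)}) :
    ∀ m, m ≤ n → m < idx (par i₁) → Pfx par Hs I₁ m = Pfx par Hs I₂ m := by
  intro m
  induction m with
  | zero => intro _ _; rw [Pfx_zero, Pfx_zero]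
  | succ m ih =>
    intro hm hlt
    have ihm := ih (by omega) (by omega)
    have hne : Hs (m+1) ≠ par i₁ := by
      intro hc
      have := idx_Hs n Hs idx hidx1 hidx2 hidx3 hinj (m := m+1) (by omega) hm
      rw [hc] at this
      omega
    by_cases hp : Hs (m+1) ∈ pars par I₁
    · have hp2 : Hs (m+1) ∈ pars par I₂ :=
        pars_transfer par holes baseHoles n Hs idx hidx1 hidx2 hidx3 hinj hord hI1 hI2 hm ihm hp
      obtain ⟨i, hiI, hpi⟩ := (mem_pars par).mp hp
      obtain ⟨i', hiI', hpi'⟩ := (mem_pars par).mp hp2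
      have : i = i' := cross_unique par hsib hiI hiI' (by rw [hpi, hpi'])
        (by rw [hpi]; exact hne)
      subst this
      rw [Pfx_step_some par Hs hI1.2 hiI hpi, Pfx_step_some par Hs hI2.2 hiI' hpi', ihm]
    · have hp2 : Hs (m+1) ∉ pars par I₂ := fun hc => hp
        (pars_transfer par holes baseHoles n Hs idx hidx1 hidx2 hidx3 hinj hord hI2 hI1 hm
          ihm.symm hc)
      rw [Pfx_step_none par Hs hp, Pfx_step_none par Hs hp2, ihm]

lemma hst_of_pfx (Hs : ℕ → κ) {I₁ I₂ : Finset ι} {m : ℕ}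
    (h : Pfx par Hs I₁ m = Pfx par Hs I₂ m) :
    Hst par holes baseHoles Hs I₁ m = Hst par holes baseHoles Hs I₂ m := by
  unfold Hst; rw [h]

lemma edge_inv (n : ℕ) (Hs : ℕ → κ) (idx : κ → ℕ)
    (hidx1 : ∀ h, 1 ≤ idx h) (hidx2 : ∀ h, idx h ≤ n) (hidx3 : ∀ h, Hs (idx h) = h)
    (hinj : ∀ j k, 1 ≤ j → j ≤ n → 1 ≤ k → k ≤ n → Hs j = Hs k → j = k)
    (hord : ∀ i : ι, ∀ h2 ∈ holes i, idx (par i) < idx h2)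
    {I₁ I₂ : Finset ι} {i₁ i₂ : ι}
    (hI1 : ValidSelection par holes baseHoles I₁)
    (hI2 : ValidSelection par holes baseHoles I₂)
    (hsib : siblings par I₁ I₂ = {(i₁, i₂)}) :
    ∀ m, idx (par i₁) ≤ m → m ≤ n →
      (Hst par holes baseHoles Hs I₁ m, Pfx par Hs I₁ m,
       Hst par holes baseHoles Hs I₂ m, Pfx par Hs I₂ m)
        ∈ (algo par holes baseHoles Hs m).2 := by
  have hmemS : (i₁, i₂) ∈ siblings par I₁ I₂ := by rw [hsib]; simp
  simp only [siblings, Finset.mem_filter, Finset.mem_product] at hmemS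
  obtain ⟨⟨hi₁, hi₂⟩, hne12, hpar12⟩ := hmemS
  intro m
  induction m with
  | zero => intro h1 _; have := hidx1 (par i₁); omega
  | succ m ih =>
    intro hk hm
    show _ ∈ (expand par holes (algo par holes baseHoles Hs m) (Hs (m+1))).2
    rcases Nat.lt_or_ge m (idx (par i₁)) with hcase | hcase
    · -- creation step: idx (par i₁) = m + 1
      have hkeq : idx (par i₁) = m + 1 := by omega
      have hHsk : Hs (m+1) = par i₁ := by rw [← hkeq, hidx3]
      have hpar2 : par i₂ = Hs (m+1) := by rw [← hpar12]; exact hHsk.symm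
      have hagree := pfx_agree par holes baseHoles n Hs idx hidx1 hidx2 hidx3 hinj hord
        hI1 hI2 hsib m (by omega) (by omega)
      have hnode := node_inv par holes baseHoles n Hs idx hidx1 hidx2 hidx3 hinj hord
        hI1 m (by omega)
      refine Set.mem_union_left _ ?_
      refine Set.mem_iUnion₂.mpr
        ⟨(Hst par holes baseHoles Hs I₁ m, Pfx par Hs I₁ m), hnode, ?_⟩
      have hp1 : Hs (m+1) ∈ pars par I₁ := (mem_pars par).mpr ⟨i₁, hi₁, hHsk.symm⟩
      have hmemH : Hs (m+1) ∈ Hst par holes baseHoles Hs I₁ m :=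
        (stage_mem par holes baseHoles n Hs idx hidx1 hidx2 hidx3 hinj hord hI1 hm).mpr hp1
      show _ ∈ newEdges par holes (Hst par holes baseHoles Hs I₁ m) (Pfx par Hs I₁ m) (Hs (m+1))
      unfold newEdges
      rw [if_pos hmemH]
      refine ⟨i₁, i₂, hHsk.symm, hpar2, hne12, ?_⟩
      rw [Hst_step_some par holes baseHoles Hs hI1.2 hi₁ hHsk.symm,
          Pfx_step_some par Hs hI1.2 hi₁ hHsk.symm,
          Hst_step_some par holes baseHoles Hs hI2.2 hi₂ hpar2,
          Pfx_step_some par Hs hI2.2 hi₂ hpar2,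
          ← hagree, ← hst_of_pfx par holes baseHoles Hs hagree]
    · -- ordinary step: idx (par i₁) ≤ m
      have ihm := ih hcase (by omega)
      refine Set.mem_union_right _ ?_
      refine Set.mem_iUnion₂.mpr ⟨_, ihm, ?_⟩
      show _ ∈ expandEdge par holes (Hst par holes baseHoles Hs I₁ m) (Pfx par Hs I₁ m)
        (Hst par holes baseHoles Hs I₂ m) (Pfx par Hs I₂ m) (Hs (m+1))
      have hneq : Hs (m+1) ≠ par i₁ := by
        intro hc
        have := idx_Hs n Hs idx hidx1 hidx2 hidx3 hinj (m := m+1) (by omega) hm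
        rw [hc] at this
        omega
      unfold expandEdge
      by_cases hp1 : Hs (m+1) ∈ pars par I₁ <;> by_cases hp2 : Hs (m+1) ∈ pars par I₂
      · have h1 : Hs (m+1) ∈ Hst par holes baseHoles Hs I₁ m :=
          (stage_mem par holes baseHoles n Hs idx hidx1 hidx2 hidx3 hinj hord hI1 hm).mpr hp1
        have h2 : Hs (m+1) ∈ Hst par holes baseHoles Hs I₂ m :=
          (stage_mem par holes baseHoles n Hs idx hidx1 hidx2 hidx3 hinj hord hI2 hm).mpr hp2
        rw [if_pos h1, if_pos h2]
        obtain ⟨i, hiI, hpi⟩ := (mem_pars par).mp hp1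
        obtain ⟨i', hiI', hpi'⟩ := (mem_pars par).mp hp2
        have heq : i = i' := cross_unique par hsib hiI hiI' (by rw [hpi, hpi'])
          (by rw [hpi]; exact hneq)
        subst heq
        refine ⟨i, hpi, ?_⟩
        rw [Hst_step_some par holes baseHoles Hs hI1.2 hiI hpi,
            Pfx_step_some par Hs hI1.2 hiI hpi,
            Hst_step_some par holes baseHoles Hs hI2.2 hiI' hpi',
            Pfx_step_some par Hs hI2.2 hiI' hpi']
      · have h1 : Hs (m+1) ∈ Hst par holes baseHoles Hs I₁ m :=
          (stage_mem par holes baseHoles n Hs idx hidx1 hidx2 hidx3 hinj hord hI1 hm).mpr hp1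
        have h2 : Hs (m+1) ∉ Hst par holes baseHoles Hs I₂ m := fun hc => hp2
          ((stage_mem par holes baseHoles n Hs idx hidx1 hidx2 hidx3 hinj hord hI2 hm).mp hc)
        rw [if_pos h1, if_neg h2]
        obtain ⟨i, hiI, hpi⟩ := (mem_pars par).mp hp1
        refine ⟨i, hpi, ?_⟩
        rw [Hst_step_some par holes baseHoles Hs hI1.2 hiI hpi,
            Pfx_step_some par Hs hI1.2 hiI hpi,
            Hst_step_none par holes baseHoles Hs hp2,
            Pfx_step_none par Hs hp2]
      · have h1 : Hs (m+1) ∉ Hst par holes baseHoles Hs I₁ m := fun hc => hp1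
          ((stage_mem par holes baseHoles n Hs idx hidx1 hidx2 hidx3 hinj hord hI1 hm).mp hc)
        have h2 : Hs (m+1) ∈ Hst par holes baseHoles Hs I₂ m :=
          (stage_mem par holes baseHoles n Hs idx hidx1 hidx2 hidx3 hinj hord hI2 hm).mpr hp2
        rw [if_neg h1, if_pos h2]
        obtain ⟨i, hiI, hpi⟩ := (mem_pars par).mp hp2
        refine ⟨i, hpi, ?_⟩
        rw [Hst_step_none par holes baseHoles Hs hp1,
            Pfx_step_none par Hs hp1,
            Hst_step_some par holes baseHoles Hs hI2.2 hiI hpi,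
            Pfx_step_some par Hs hI2.2 hiI hpi]
      · have h1 : Hs (m+1) ∉ Hst par holes baseHoles Hs I₁ m := fun hc => hp1
          ((stage_mem par holes baseHoles n Hs idx hidx1 hidx2 hidx3 hinj hord hI1 hm).mp hc)
        have h2 : Hs (m+1) ∉ Hst par holes baseHoles Hs I₂ m := fun hc => hp2
          ((stage_mem par holes baseHoles n Hs idx hidx1 hidx2 hidx3 hinj hord hI2 hm).mp hc)
        rw [if_neg h1, if_neg h2]
        simp only [Set.mem_singleton_iff, Prod.mk.injEq]
        exact ⟨Hst_step_none par holes baseHoles Hs hp1, Pfx_step_none par Hs hp1,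
          Hst_step_none par holes baseHoles Hs hp2, Pfx_step_none par Hs hp2⟩

end AuxMG

/-- `E_j` is a complete set of edge prefixes: for every `j ∈ {0, 1, …, n}`, the
restriction to `impls(H_{1:j})` of every pair of valid selections with a single sibling
pair whose hole has already been visited appears among the algorithm's edge prefixes. -/
theorem algo_edges_complete {ι κ : Type*}
    [Fintype ι] [DecidableEq ι] [Fintype κ] [DecidableEq κ]
    (par : ι → κ) (holes : ι → Finset κ) (baseHoles : Finset κ)
    (hvalid : StructValid par holes baseHoles)
    (n : ℕ) (Hs : ℕ → κ) (htopo : TopoEnum par holes n Hs)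
    (j : ℕ) (hjn : j ≤ n) :
    {p : Finset ι × Finset ι | ∃ (I₁ I₂ : Finset ι) (i₁ i₂ : ι),
        ValidSelection par holes baseHoles I₁ ∧ ValidSelection par holes baseHoles I₂ ∧
        siblings par I₁ I₂ = {(i₁, i₂)} ∧ par i₁ ∈ Hpre Hs j ∧
        p = (I₁ ∩ implsHs par (Hpre Hs j), I₂ ∩ implsHs par (Hpre Hs j))} ⊆
    {p : Finset ι × Finset ι | ∃ (H₁ H₂ : Finset κ),
        (H₁, p.1, H₂, p.2) ∈ (algo par holes baseHoles Hs j).2} := by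
  intro p hp
  obtain ⟨I₁, I₂, i₁, i₂, hI1, hI2, hsib, hmemH, hpe⟩ := hp
  obtain ⟨henum, hinj, htord⟩ := htopo
  choose idx hidx1 hidx2 hidx3 using henum
  have hord : ∀ i : ι, ∀ h2 ∈ holes i, idx (par i) < idx h2 := by
    intro i h2 hh2
    refine htord (idx (par i)) (idx h2) (hidx1 _) (hidx2 _) (hidx1 _) (hidx2 _) ?_
    rw [hidx3, hidx3]
    exact ⟨i, rfl, hh2⟩
  have hk : idx (par i₁) ≤ j :=
    (mem_Hpre_s10 n Hs idx hidx1 hidx2 hidx3 hinj hjn).mp hmemH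
  have hmain := edge_inv par holes baseHoles n Hs idx hidx1 hidx2 hidx3 hinj hord
    hI1 hI2 hsib j hk hjn
  subst hpe
  exact ⟨Hst par holes baseHoles Hs I₁ j, Hst par holes baseHoles Hs I₂ j, hmain⟩
end

section
/- Suppose the modular program signature is structurally valid. Then { (I₁, I₂) | (H₁, I₁, H₂, I₂) ∈ E_n } = { (I₁, I₂) | I₁, I₂ valid selections with |siblings(I₁, I₂)| = 1 }, i.e., the final edge set produced by the model-graph algorithm is exactly the edge set of the model graph. -/
namespace ModelGraphAux

set_option linter.unusedSectionVars false
set_option linter.unusedVariables false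

open Finset

variable {ι κ : Type*} [Fintype ι] [DecidableEq ι] [Fintype κ] [DecidableEq κ]

lemma mem_siblings {par : ι → κ} {I₁ I₂ : Finset ι} {a b : ι} :
    (a, b) ∈ siblings par I₁ I₂ ↔ a ∈ I₁ ∧ b ∈ I₂ ∧ a ≠ b ∧ par a = par b := by
  simp [siblings, Finset.mem_filter, Finset.mem_product, and_assoc]

lemma siblings_eq_empty {par : ι → κ} {I₁ I₂ : Finset ι} :
    siblings par I₁ I₂ = ∅ ↔
      ∀ a ∈ I₁, ∀ b ∈ I₂, a ≠ b → par a ≠ par b := by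
  constructor
  · intro h a ha b hb hne hpar
    have : (a, b) ∈ siblings par I₁ I₂ := mem_siblings.2 ⟨ha, hb, hne, hpar⟩
    simp [h] at this
  · intro h
    ext ⟨a, b⟩
    simp only [mem_siblings, Finset.notMem_empty, iff_false]
    rintro ⟨ha, hb, hne, hpar⟩
    exact h a ha b hb hne hpar

lemma siblings_mono {par : ι → κ} {I₁ I₂ J₁ J₂ : Finset ι} (h1 : I₁ ⊆ J₁) (h2 : I₂ ⊆ J₂) :
    siblings par I₁ I₂ ⊆ siblings par J₁ J₂ := by
  rintro ⟨a, b⟩ hp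
  rw [mem_siblings] at *
  exact ⟨h1 hp.1, h2 hp.2.1, hp.2.2⟩

lemma siblings_insert_left {par : ι → κ} {I₁ I₂ : Finset ι} {i : ι}
    (h : ∀ b ∈ I₂, par b ≠ par i) :
    siblings par (insert i I₁) I₂ = siblings par I₁ I₂ := by
  ext ⟨a, b⟩
  simp only [mem_siblings, Finset.mem_insert]
  constructor
  · rintro ⟨ha | ha, hb, hne, hpar⟩
    · subst ha; exact absurd hpar.symm (h b hb)
    · exact ⟨ha, hb, hne, hpar⟩
  · rintro ⟨ha, hb, hne, hpar⟩
    exact ⟨Or.inr ha, hb, hne, hpar⟩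

lemma siblings_insert_right {par : ι → κ} {I₁ I₂ : Finset ι} {i : ι}
    (h : ∀ a ∈ I₁, par a ≠ par i) :
    siblings par I₁ (insert i I₂) = siblings par I₁ I₂ := by
  ext ⟨a, b⟩
  simp only [mem_siblings, Finset.mem_insert]
  constructor
  · rintro ⟨ha, hb | hb, hne, hpar⟩
    · subst hb; exact absurd hpar (h a ha)
    · exact ⟨ha, hb, hne, hpar⟩
  · rintro ⟨ha, hb, hne, hpar⟩
    exact ⟨ha, Or.inr hb, hne, hpar⟩

lemma siblings_insert_both_same {par : ι → κ} {I₁ I₂ : Finset ι} {i : ι}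
    (h1 : ∀ a ∈ I₁, par a ≠ par i) (h2 : ∀ b ∈ I₂, par b ≠ par i) :
    siblings par (insert i I₁) (insert i I₂) = siblings par I₁ I₂ := by
  ext ⟨a, b⟩
  simp only [mem_siblings, Finset.mem_insert]
  constructor
  · rintro ⟨ha | ha, hb | hb, hne, hpar⟩
    · exact absurd (ha ▸ hb ▸ rfl) hne
    · subst ha; exact absurd hpar.symm (h2 b hb)
    · subst hb; exact absurd hpar (h1 a ha)
    · exact ⟨ha, hb, hne, hpar⟩
  · rintro ⟨ha, hb, hne, hpar⟩
    exact ⟨Or.inr ha, Or.inr hb, hne, hpar⟩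

lemma siblings_insert_both {par : ι → κ} {I₁ I₂ : Finset ι} {i₁ i₂ : ι}
    (hne : i₁ ≠ i₂) (hpar : par i₁ = par i₂)
    (h1 : ∀ a ∈ I₁, par a ≠ par i₁) (h2 : ∀ b ∈ I₂, par b ≠ par i₁) :
    siblings par (insert i₁ I₁) (insert i₂ I₂) =
      insert (i₁, i₂) (siblings par I₁ I₂) := by
  ext ⟨a, b⟩
  simp only [mem_siblings, Finset.mem_insert, Prod.mk.injEq]
  constructor
  · rintro ⟨ha | ha, hb | hb, hne', hpar'⟩
    · exact Or.inl ⟨ha, hb⟩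
    · subst ha; exact absurd hpar'.symm (h2 b hb)
    · subst hb; exact absurd (hpar.symm ▸ hpar') (h1 a ha)
    · exact Or.inr ⟨ha, hb, hne', hpar'⟩
  · rintro (⟨ha, hb⟩ | ⟨ha, hb, hne', hpar'⟩)
    · exact ⟨Or.inl ha, Or.inl hb, ha ▸ hb ▸ hne, ha ▸ hb ▸ hpar⟩
    · exact ⟨Or.inr ha, Or.inr hb, hne', hpar'⟩

lemma siblings_swap {par : ι → κ} {I₁ I₂ : Finset ι} (h : siblings par I₁ I₂ = ∅) :
    siblings par I₂ I₁ = ∅ := by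
  rw [siblings_eq_empty] at h ⊢
  intro a ha b hb hne hpar
  exact h b hb a ha hne.symm hpar.symm

/-- `FH I` is the set of holes required by base and by `I`. -/
def FH (holes : ι → Finset κ) (baseHoles : Finset κ) (I : Finset ι) : Finset κ :=
  baseHoles ∪ holesOf holes I

lemma FH_insert (holes : ι → Finset κ) (baseHoles : Finset κ) (I : Finset ι) (i : ι) :
    FH holes baseHoles (insert i I) = FH holes baseHoles I ∪ holes i := by
  simp only [FH, holesOf, Finset.biUnion_insert]
  ext x
  simp only [Finset.mem_union]
  tauto

/-- Partial selection at stage `j`. -/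
def PS (par : ι → κ) (holes : ι → Finset κ) (baseHoles : Finset κ) (Hs : ℕ → κ)
    (j : ℕ) (I : Finset ι) : Prop :=
  (∀ i ∈ I, par i ∈ Hpre Hs j) ∧ siblings par I I = ∅ ∧
    pars par I = FH holes baseHoles I ∩ Hpre Hs j

lemma mem_Hpre {Hs : ℕ → κ} {j : ℕ} {h : κ} :
    h ∈ Hpre Hs j ↔ ∃ k, 1 ≤ k ∧ k ≤ j ∧ Hs k = h := by
  simp [Hpre, Finset.mem_image, Finset.mem_Icc, and_assoc]

lemma Hpre_mono {Hs : ℕ → κ} {j k : ℕ} (h : j ≤ k) : Hpre Hs j ⊆ Hpre Hs k :=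
  Finset.image_subset_image (Finset.Icc_subset_Icc_right h)

lemma Hpre_succ (Hs : ℕ → κ) (j : ℕ) :
    Hpre Hs (j + 1) = insert (Hs (j + 1)) (Hpre Hs j) := by
  rw [Hpre, ← Finset.insert_Icc_right_eq_Icc_add_one (by omega), Finset.image_insert]
  rfl

lemma Hpre_zero (Hs : ℕ → κ) : Hpre Hs 0 = ∅ := by
  simp [Hpre]

section Topo

variable {par : ι → κ} {holes : ι → Finset κ} {n : ℕ} {Hs : ℕ → κ}
variable (htopo : TopoEnum par holes n Hs)

include htopo

lemma fresh {j : ℕ} (hj : j + 1 ≤ n) : Hs (j + 1) ∉ Hpre Hs j := by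
  rw [mem_Hpre]
  rintro ⟨k, hk1, hkj, hkeq⟩
  have := htopo.2.1 k (j + 1) hk1 (by omega) (by omega) hj hkeq
  omega

lemma holes_fresh {j : ℕ} (hj : j + 1 ≤ n) {i : ι} (hi : par i = Hs (j + 1)) :
    ∀ h' ∈ holes i, h' ∉ Hpre Hs (j + 1) := by
  intro h' hh' hmem
  rw [mem_Hpre] at hmem
  obtain ⟨k, hk1, hkj, hkeq⟩ := hmem
  have hdep : GDep par holes (Hs (j + 1)) (Hs k) := ⟨i, hi, hkeq ▸ hh'⟩
  have := htopo.2.2 (j + 1) k (by omega) hj hk1 (by omega) hdep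
  omega

lemma Hpre_n_eq_univ : Hpre Hs n = Finset.univ := by
  ext h
  simp only [Finset.mem_univ, iff_true, mem_Hpre]
  obtain ⟨j, h1, h2, h3⟩ := htopo.1 h
  exact ⟨j, h1, h2, h3⟩

end Topo

section Steps

variable {par : ι → κ} {holes : ι → Finset κ} {baseHoles : Finset κ} {n : ℕ} {Hs : ℕ → κ}
variable (htopo : TopoEnum par holes n Hs)

/-- Soundness of node expansion when `h ∈ FH I`. -/
lemma PS_insert (htopo : TopoEnum par holes n Hs) {j : ℕ} (hj : j + 1 ≤ n) {I : Finset ι}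
    (hPS : PS par holes baseHoles Hs j I) {i : ι} (hi : par i = Hs (j + 1))
    (hh : Hs (j + 1) ∈ FH holes baseHoles I) :
    PS par holes baseHoles Hs (j + 1) (insert i I) := by
  obtain ⟨hdom, hsib, hpars⟩ := hPS
  have hfresh : Hs (j + 1) ∉ Hpre Hs j := fresh htopo hj
  have hIne : ∀ a ∈ I, par a ≠ Hs (j + 1) := fun a ha he => hfresh (he ▸ hdom a ha)
  refine ⟨?_, ?_, ?_⟩
  · intro a ha
    rw [Finset.mem_insert] at ha
    rcases ha with rfl | ha
    · rw [Hpre_succ, hi]; exact Finset.mem_insert_self _ _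
    · exact Hpre_mono (Nat.le_succ j) (hdom a ha)
  · rw [siblings_insert_both_same (fun a ha => hi ▸ hIne a ha) (fun a ha => hi ▸ hIne a ha),
      hsib]
  · rw [pars, Finset.image_insert, FH_insert, Hpre_succ]
    have hdisj : holes i ∩ insert (Hs (j + 1)) (Hpre Hs j) = ∅ := by
      rw [Finset.eq_empty_iff_forall_notMem]
      intro x hx
      rw [Finset.mem_inter] at hx
      exact holes_fresh htopo hj hi x hx.1 ((Hpre_succ Hs j) ▸ hx.2)
    rw [Finset.union_inter_distrib_right, hdisj, Finset.union_empty,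
      Finset.inter_comm, Finset.insert_inter_of_mem hh, Finset.inter_comm, ← hpars, hi]
    rfl

/-- Soundness of node non-expansion when `h ∉ FH I`. -/
lemma PS_keep (htopo : TopoEnum par holes n Hs) {j : ℕ} (hj : j + 1 ≤ n) {I : Finset ι}
    (hPS : PS par holes baseHoles Hs j I)
    (hh : Hs (j + 1) ∉ FH holes baseHoles I) :
    PS par holes baseHoles Hs (j + 1) I := by
  obtain ⟨hdom, hsib, hpars⟩ := hPS
  refine ⟨fun a ha => Hpre_mono (Nat.le_succ j) (hdom a ha), hsib, ?_⟩
  rw [Hpre_succ, Finset.inter_comm, Finset.insert_inter_of_notMem hh, Finset.inter_comm,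
    hpars]

/-- Completeness: decomposing a stage-`j+1` partial selection containing an impl of
`Hs (j+1)`. -/
lemma PS_decomp (htopo : TopoEnum par holes n Hs) {j : ℕ} (hj : j + 1 ≤ n) {I' : Finset ι}
    (hPS : PS par holes baseHoles Hs (j + 1) I') {i : ι} (hi : i ∈ I')
    (hpi : par i = Hs (j + 1)) :
    PS par holes baseHoles Hs j (I'.erase i) ∧
      Hs (j + 1) ∈ FH holes baseHoles (I'.erase i) ∧
      (∀ a ∈ I'.erase i, par a ≠ Hs (j + 1)) := by
  obtain ⟨hdom, hsib, hpars⟩ := hPS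
  have hfresh : Hs (j + 1) ∉ Hpre Hs j := fresh htopo hj
  have huniq : ∀ a ∈ I', par a = Hs (j + 1) → a = i := by
    intro a ha hpa
    by_contra hne
    have : (a, i) ∈ siblings par I' I' := mem_siblings.2 ⟨ha, hi, hne, hpa.trans hpi.symm⟩
    simp [hsib] at this
  have hInot : ∀ a ∈ I'.erase i, par a ≠ Hs (j + 1) := by
    intro a ha he
    exact (Finset.ne_of_mem_erase ha) (huniq a (Finset.mem_of_mem_erase ha) he)
  have hIdom : ∀ a ∈ I'.erase i, par a ∈ Hpre Hs j := by
    intro a ha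
    have := hdom a (Finset.mem_of_mem_erase ha)
    rw [Hpre_succ, Finset.mem_insert] at this
    rcases this with he | h
    · exact absurd he (hInot a ha)
    · exact h
  have hins : insert i (I'.erase i) = I' := Finset.insert_erase hi
  have hdisj : ∀ h' ∈ holes i, h' ∉ Hpre Hs (j + 1) := holes_fresh htopo hj hpi
  have hFH : Hs (j + 1) ∈ FH holes baseHoles (I'.erase i) := by
    have hmem : Hs (j + 1) ∈ FH holes baseHoles I' := by
      have : Hs (j + 1) ∈ pars par I' := Finset.mem_image.2 ⟨i, hi, hpi⟩
      rw [hpars, Finset.mem_inter] at this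
      exact this.1
    rw [FH, Finset.mem_union] at hmem ⊢
    rcases hmem with hb | hho
    · exact Or.inl hb
    · right
      rw [holesOf, Finset.mem_biUnion] at hho ⊢
      obtain ⟨c, hc, hhc⟩ := hho
      rcases eq_or_ne c i with rfl | hne
      · exact absurd ((Hpre_succ Hs j) ▸ Finset.mem_insert_self _ _ : Hs (j+1) ∈ Hpre Hs (j+1))
          (hdisj _ hhc)
      · exact ⟨c, Finset.mem_erase.2 ⟨hne, hc⟩, hhc⟩
  refine ⟨⟨hIdom, ?_, ?_⟩, hFH, hInot⟩
  · rw [Finset.eq_empty_iff_forall_notMem]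
    rintro ⟨a, b⟩ hab
    have : (a, b) ∈ siblings par I' I' :=
      siblings_mono (Finset.erase_subset i I') (Finset.erase_subset i I') hab
    simp [hsib] at this
  · -- pars (I'.erase i) = FH (I'.erase i) ∩ Hpre j
    have hFH' : FH holes baseHoles I' = FH holes baseHoles (I'.erase i) ∪ holes i := by
      rw [← FH_insert, hins]
    have hparsI' : pars par I' = insert (Hs (j + 1)) (pars par (I'.erase i)) := by
      conv_lhs => rw [← hins]
      simp [pars, Finset.image_insert, hpi]
    have hsub : pars par (I'.erase i) ⊆ Hpre Hs j := by
      intro x hx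
      obtain ⟨a, ha, rfl⟩ := Finset.mem_image.1 hx
      exact hIdom a ha
    have hnm : Hs (j + 1) ∉ pars par (I'.erase i) := by
      intro hx
      obtain ⟨a, ha, he⟩ := Finset.mem_image.1 hx
      exact hInot a ha he
    have hkey : pars par I' ∩ Hpre Hs j = pars par (I'.erase i) := by
      rw [hparsI', Finset.insert_inter_of_notMem hfresh, Finset.inter_eq_left.2 hsub]
    have hd2 : holes i ∩ Hpre Hs j = ∅ := by
      rw [Finset.eq_empty_iff_forall_notMem]
      intro x hx
      rw [Finset.mem_inter] at hx
      exact hdisj x hx.1 (Hpre_mono (Nat.le_succ j) hx.2)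
    calc pars par (I'.erase i) = pars par I' ∩ Hpre Hs j := hkey.symm
      _ = (FH holes baseHoles I' ∩ Hpre Hs (j + 1)) ∩ Hpre Hs j := by rw [hpars]
      _ = FH holes baseHoles I' ∩ Hpre Hs j := by
          rw [Finset.inter_assoc, Finset.inter_eq_right.2 (Hpre_mono (Nat.le_succ j))]
      _ = FH holes baseHoles (I'.erase i) ∩ Hpre Hs j := by
          rw [hFH', Finset.union_inter_distrib_right, hd2, Finset.union_empty]

/-- Completeness: a stage-`j+1` partial selection with no impl of `Hs (j+1)` was
already a stage-`j` partial selection not containing `Hs (j+1)` in its holes. -/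
lemma PS_undecomp (htopo : TopoEnum par holes n Hs) {j : ℕ} (hj : j + 1 ≤ n) {I' : Finset ι}
    (hPS : PS par holes baseHoles Hs (j + 1) I')
    (hno : ∀ a ∈ I', par a ≠ Hs (j + 1)) :
    PS par holes baseHoles Hs j I' ∧ Hs (j + 1) ∉ FH holes baseHoles I' := by
  obtain ⟨hdom, hsib, hpars⟩ := hPS
  have hnp : Hs (j + 1) ∉ pars par I' := by
    intro hx
    obtain ⟨a, ha, he⟩ := Finset.mem_image.1 hx
    exact hno a ha he
  have hnF : Hs (j + 1) ∉ FH holes baseHoles I' := by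
    intro hF
    apply hnp
    rw [hpars, Finset.mem_inter]
    exact ⟨hF, (Hpre_succ Hs j) ▸ Finset.mem_insert_self _ _⟩
  refine ⟨⟨?_, hsib, ?_⟩, hnF⟩
  · intro a ha
    have := hdom a ha
    rw [Hpre_succ, Finset.mem_insert] at this
    rcases this with he | h
    · exact absurd he (hno a ha)
    · exact h
  · rw [hpars, Hpre_succ, Finset.inter_comm, Finset.insert_inter_of_notMem hnF,
      Finset.inter_comm]

end Steps

end ModelGraphAux

namespace ModelGraphAux

open Finset

variable {ι κ : Type*} [Fintype ι] [DecidableEq ι] [Fintype κ] [DecidableEq κ]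

section Distinct

variable {par : ι → κ} {holes : ι → Finset κ} {baseHoles : Finset κ} {Hs : ℕ → κ}

lemma PS_subset_of_no_siblings
    (hacyc : Irreflexive (Relation.TransGen (MDG par holes baseHoles)))
    {j : ℕ} {I₁ I₂ : Finset ι}
    (h₁ : PS par holes baseHoles Hs j I₁) (h₂ : PS par holes baseHoles Hs j I₂)
    (hsib : siblings par I₁ I₂ = ∅) : I₁ ⊆ I₂ := by
  classical
  set D : Finset ι := I₁ \ I₂ with hD
  suffices hDe : D = ∅ by
    intro a ha
    by_contra hna
    have : a ∈ D := Finset.mem_sdiff.2 ⟨ha, hna⟩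
    simp [hDe] at this
  by_contra hne
  obtain ⟨a₀, ha₀⟩ := Finset.nonempty_of_ne_empty hne
  -- every element of D has an MDG-predecessor in D
  have key : ∀ a ∈ D, ∃ c ∈ D, MDG par holes baseHoles (some c) (some a) := by
    intro a haD
    obtain ⟨ha1, ha2⟩ := Finset.mem_sdiff.1 haD
    have hpa1 : par a ∈ pars par I₁ := Finset.mem_image.2 ⟨a, ha1, rfl⟩
    have hpaH : par a ∈ Hpre Hs j := by
      rw [h₁.2.2, Finset.mem_inter] at hpa1; exact hpa1.2
    have hpaF : par a ∈ FH holes baseHoles I₁ := by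
      have := hpa1
      rw [h₁.2.2, Finset.mem_inter] at this; exact this.1
    have hnp2 : par a ∉ pars par I₂ := by
      intro hx
      obtain ⟨b, hb, hpb⟩ := Finset.mem_image.1 hx
      have hne' : a ≠ b := fun he => ha2 (he ▸ hb)
      have : (a, b) ∈ siblings par I₁ I₂ := mem_siblings.2 ⟨ha1, hb, hne', hpb.symm⟩
      simp [hsib] at this
    have hnF2 : par a ∉ FH holes baseHoles I₂ := by
      intro hx
      exact hnp2 (h₂.2.2 ▸ Finset.mem_inter.2 ⟨hx, hpaH⟩)
    have hnb : par a ∉ baseHoles := fun hx => hnF2 (Finset.mem_union_left _ hx)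
    have hnh2 : par a ∉ holesOf holes I₂ := fun hx => hnF2 (Finset.mem_union_right _ hx)
    rw [FH, Finset.mem_union] at hpaF
    rcases hpaF with hb | hh
    · exact absurd hb hnb
    · rw [holesOf, Finset.mem_biUnion] at hh
      obtain ⟨c, hc1, hc2⟩ := hh
      have hc2' : c ∉ I₂ := by
        intro hx
        exact hnh2 (Finset.mem_biUnion.2 ⟨c, hx, hc2⟩)
      exact ⟨c, Finset.mem_sdiff.2 ⟨hc1, hc2'⟩, hc2⟩
  -- well-foundedness of the transitive closure
  haveI : IsTrans (Option ι) (Relation.TransGen (MDG par holes baseHoles)) :=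
    ⟨fun _ _ _ => Relation.TransGen.trans⟩
  haveI : IsIrrefl (Option ι) (Relation.TransGen (MDG par holes baseHoles)) := ⟨hacyc⟩
  have hwf := Finite.wellFounded_of_trans_of_irrefl
    (Relation.TransGen (MDG par holes baseHoles))
  obtain ⟨m, hmS, hmin⟩ := hwf.has_min {x : Option ι | ∃ a ∈ D, x = some a}
    ⟨some a₀, a₀, ha₀, rfl⟩
  obtain ⟨a, haD, rfl⟩ := hmS
  obtain ⟨c, hcD, hM⟩ := key a haD
  exact hmin (some c) ⟨c, hcD, rfl⟩ (Relation.TransGen.single hM)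

lemma PS_eq_of_no_siblings
    (hacyc : Irreflexive (Relation.TransGen (MDG par holes baseHoles)))
    {j : ℕ} {I₁ I₂ : Finset ι}
    (h₁ : PS par holes baseHoles Hs j I₁) (h₂ : PS par holes baseHoles Hs j I₂)
    (hsib : siblings par I₁ I₂ = ∅) : I₁ = I₂ :=
  Finset.Subset.antisymm (PS_subset_of_no_siblings hacyc h₁ h₂ hsib)
    (PS_subset_of_no_siblings hacyc h₂ h₁ (siblings_swap hsib))

end Distinct

section Invariant

variable (par : ι → κ) (holes : ι → Finset κ) (baseHoles : Finset κ) (Hs : ℕ → κ)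

/-- Characterization of the node set at stage `j`. -/
def NodeSet (j : ℕ) : Set (Finset κ × Finset ι) :=
  {p | PS par holes baseHoles Hs j p.2 ∧ p.1 = FH holes baseHoles p.2}

/-- Characterization of the edge set at stage `j`. -/
def EdgeSet (j : ℕ) : Set (Finset κ × Finset ι × Finset κ × Finset ι) :=
  {q | PS par holes baseHoles Hs j q.2.1 ∧ PS par holes baseHoles Hs j q.2.2.2 ∧
    q.1 = FH holes baseHoles q.2.1 ∧ q.2.2.1 = FH holes baseHoles q.2.2.2 ∧
    (siblings par q.2.1 q.2.2.2).card = 1}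

variable {n : ℕ}

lemma node_step (htopo : TopoEnum par holes n Hs) {j : ℕ} (hj : j + 1 ≤ n) :
    (⋃ p ∈ NodeSet par holes baseHoles Hs j,
      expandNode par holes p.1 p.2 (Hs (j + 1))) =
      NodeSet par holes baseHoles Hs (j + 1) := by
  set h := Hs (j + 1) with hh
  ext ⟨H', I'⟩
  simp only [Set.mem_iUnion, exists_prop, Prod.exists]
  constructor
  · rintro ⟨H, I, ⟨hPS, hHF⟩, hmem⟩
    simp only at hPS hHF
    subst hHF
    by_cases hc : h ∈ FH holes baseHoles I
    · rw [expandNode, if_pos hc] at hmem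
      obtain ⟨i, hpi, heq⟩ := hmem
      rw [Prod.mk.injEq] at heq
      obtain ⟨rfl, rfl⟩ := heq
      exact ⟨PS_insert htopo hj hPS hpi hc, (FH_insert holes baseHoles I i).symm ▸ rfl⟩
    · rw [expandNode, if_neg hc] at hmem
      rw [Set.mem_singleton_iff, Prod.mk.injEq] at hmem
      obtain ⟨rfl, rfl⟩ := hmem
      exact ⟨PS_keep htopo hj hPS hc, rfl⟩
  · rintro ⟨hPS, hHF⟩
    simp only at hPS hHF
    subst hHF
    by_cases hc : ∃ i ∈ I', par i = h
    · obtain ⟨i, hi, hpi⟩ := hc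
      obtain ⟨hPSe, hFHe, _⟩ := PS_decomp htopo hj hPS hi hpi
      refine ⟨FH holes baseHoles (I'.erase i), I'.erase i, ⟨hPSe, rfl⟩, ?_⟩
      rw [expandNode, if_pos hFHe]
      refine ⟨i, hpi, ?_⟩
      rw [Prod.mk.injEq]
      constructor
      · rw [← FH_insert, Finset.insert_erase hi]
      · rw [Finset.insert_erase hi]
    · push_neg at hc
      obtain ⟨hPSj, hnF⟩ := PS_undecomp htopo hj hPS hc
      exact ⟨FH holes baseHoles I', I', ⟨hPSj, rfl⟩,
        by rw [expandNode, if_neg hnF]; rfl⟩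

lemma edge_step (hacyc : Irreflexive (Relation.TransGen (MDG par holes baseHoles)))
    (htopo : TopoEnum par holes n Hs) {j : ℕ} (hj : j + 1 ≤ n) :
    ((⋃ p ∈ NodeSet par holes baseHoles Hs j,
        newEdges par holes p.1 p.2 (Hs (j + 1))) ∪
      ⋃ q ∈ EdgeSet par holes baseHoles Hs j,
        expandEdge par holes q.1 q.2.1 q.2.2.1 q.2.2.2 (Hs (j + 1))) =
      EdgeSet par holes baseHoles Hs (j + 1) := by
  set h := Hs (j + 1) with hh
  have hfresh : h ∉ Hpre Hs j := fresh htopo hj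
  ext ⟨H₁', I₁', H₂', I₂'⟩
  constructor
  · rintro (hmem | hmem)
    · -- from newEdges
      rw [Set.mem_iUnion₂] at hmem
      obtain ⟨⟨H, I⟩, ⟨hPS, hHF⟩, hmem⟩ := hmem
      simp only at hPS hHF
      subst hHF
      by_cases hc : h ∈ FH holes baseHoles I
      · rw [newEdges, if_pos hc] at hmem
        obtain ⟨i₁, i₂, hp1, hp2, hne, heq⟩ := hmem
        rw [Prod.mk.injEq, Prod.mk.injEq, Prod.mk.injEq] at heq
        obtain ⟨rfl, rfl, rfl, rfl⟩ := heq
        have hIne : ∀ a ∈ I, par a ≠ par i₁ := by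
          intro a ha he
          exact hfresh (hp1 ▸ he ▸ hPS.1 a ha)
        refine ⟨PS_insert htopo hj hPS hp1 hc, PS_insert htopo hj hPS hp2 hc,
          (FH_insert holes baseHoles I i₁).symm, (FH_insert holes baseHoles I i₂).symm, ?_⟩
        rw [siblings_insert_both hne (hp1.trans hp2.symm) hIne hIne, hPS.2.1]
        simp
      · rw [newEdges, if_neg hc] at hmem
        exact absurd hmem (Set.notMem_empty _)
    · -- from expandEdge
      rw [Set.mem_iUnion₂] at hmem
      obtain ⟨⟨H₁, I₁, H₂, I₂⟩, ⟨hPS1, hPS2, hHF1, hHF2, hcard⟩, hmem⟩ := hmem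
      simp only at hPS1 hPS2 hHF1 hHF2 hcard hmem
      subst hHF1; subst hHF2
      have hIne1 : ∀ a ∈ I₁, par a ≠ h := fun a ha he => hfresh (he ▸ hPS1.1 a ha)
      have hIne2 : ∀ a ∈ I₂, par a ≠ h := fun a ha he => hfresh (he ▸ hPS2.1 a ha)
      by_cases hc1 : h ∈ FH holes baseHoles I₁ <;>
        by_cases hc2 : h ∈ FH holes baseHoles I₂
      · rw [expandEdge, if_pos hc1, if_pos hc2] at hmem
        obtain ⟨i, hpi, heq⟩ := hmem
        rw [Prod.mk.injEq, Prod.mk.injEq, Prod.mk.injEq] at heq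
        obtain ⟨rfl, rfl, rfl, rfl⟩ := heq
        refine ⟨PS_insert htopo hj hPS1 hpi hc1, PS_insert htopo hj hPS2 hpi hc2,
          (FH_insert holes baseHoles I₁ i).symm, (FH_insert holes baseHoles I₂ i).symm, ?_⟩
        rw [siblings_insert_both_same (fun a ha => hpi ▸ hIne1 a ha)
          (fun a ha => hpi ▸ hIne2 a ha)]
        exact hcard
      · rw [expandEdge, if_pos hc1, if_neg hc2] at hmem
        obtain ⟨i, hpi, heq⟩ := hmem
        rw [Prod.mk.injEq, Prod.mk.injEq, Prod.mk.injEq] at heq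
        obtain ⟨rfl, rfl, rfl, rfl⟩ := heq
        refine ⟨PS_insert htopo hj hPS1 hpi hc1, PS_keep htopo hj hPS2 hc2,
          (FH_insert holes baseHoles I₁ i).symm, rfl, ?_⟩
        rw [siblings_insert_left (fun b hb => hpi ▸ hIne2 b hb)]
        exact hcard
      · rw [expandEdge, if_neg hc1, if_pos hc2] at hmem
        obtain ⟨i, hpi, heq⟩ := hmem
        rw [Prod.mk.injEq, Prod.mk.injEq, Prod.mk.injEq] at heq
        obtain ⟨rfl, rfl, rfl, rfl⟩ := heq
        refine ⟨PS_keep htopo hj hPS1 hc1, PS_insert htopo hj hPS2 hpi hc2,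
          rfl, (FH_insert holes baseHoles I₂ i).symm, ?_⟩
        rw [siblings_insert_right (fun a ha => hpi ▸ hIne1 a ha)]
        exact hcard
      · rw [expandEdge, if_neg hc1, if_neg hc2] at hmem
        rw [Set.mem_singleton_iff, Prod.mk.injEq, Prod.mk.injEq, Prod.mk.injEq] at hmem
        obtain ⟨rfl, rfl, rfl, rfl⟩ := hmem
        exact ⟨PS_keep htopo hj hPS1 hc1, PS_keep htopo hj hPS2 hc2, rfl, rfl, hcard⟩
  · rintro ⟨hPS1, hPS2, hHF1, hHF2, hcard⟩
    simp only at hPS1 hPS2 hHF1 hHF2 hcard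
    subst hHF1; subst hHF2
    by_cases hc1 : ∃ i ∈ I₁', par i = h <;> by_cases hc2 : ∃ i ∈ I₂', par i = h
    · -- both contain an implementation of h
      obtain ⟨i₁, hi₁, hpi₁⟩ := hc1
      obtain ⟨i₂, hi₂, hpi₂⟩ := hc2
      obtain ⟨hPSe1, hFHe1, hInot1⟩ := PS_decomp htopo hj hPS1 hi₁ hpi₁
      obtain ⟨hPSe2, hFHe2, hInot2⟩ := PS_decomp htopo hj hPS2 hi₂ hpi₂
      have hins1 : insert i₁ (I₁'.erase i₁) = I₁' := Finset.insert_erase hi₁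
      have hins2 : insert i₂ (I₂'.erase i₂) = I₂' := Finset.insert_erase hi₂
      rcases eq_or_ne i₁ i₂ with rfl | hne
      · -- same implementation: comes from expandEdge
        right
        rw [Set.mem_iUnion₂]
        refine ⟨(FH holes baseHoles (I₁'.erase i₁), I₁'.erase i₁,
          FH holes baseHoles (I₂'.erase i₁), I₂'.erase i₁), ⟨hPSe1, hPSe2, rfl, rfl, ?_⟩, ?_⟩
        · -- card of siblings of erased sets
          have : siblings par I₁' I₂' =
              siblings par (I₁'.erase i₁) (I₂'.erase i₁) := by
            conv_lhs => rw [← hins1, ← hins2]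
            exact siblings_insert_both_same (fun a ha => hpi₁ ▸ hInot1 a ha)
              (fun b hb => hpi₁ ▸ hInot2 b hb)
          rw [← this]; exact hcard
        · rw [expandEdge, if_pos hFHe1, if_pos hFHe2]
          refine ⟨i₁, hpi₁, ?_⟩
          rw [Prod.mk.injEq, Prod.mk.injEq, Prod.mk.injEq]
          exact ⟨by rw [← FH_insert, hins1], hins1.symm ▸ rfl,
            by rw [← FH_insert, hins2], hins2.symm ▸ rfl⟩
      · -- distinct implementations: comes from newEdges
        left
        have hsibeq : siblings par I₁' I₂' =
            insert (i₁, i₂) (siblings par (I₁'.erase i₁) (I₂'.erase i₂)) := by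
          conv_lhs => rw [← hins1, ← hins2]
          exact siblings_insert_both hne (hpi₁.trans hpi₂.symm)
            (fun a ha => hpi₁ ▸ hInot1 a ha) (fun b hb => hpi₁ ▸ hInot2 b hb)
        have hnm : (i₁, i₂) ∉ siblings par (I₁'.erase i₁) (I₂'.erase i₂) := by
          intro hx
          exact (Finset.notMem_erase i₁ I₁') (mem_siblings.1 hx).1
        have hempty : siblings par (I₁'.erase i₁) (I₂'.erase i₂) = ∅ := by
          have := hcard
          rw [hsibeq, Finset.card_insert_of_notMem hnm] at this
          exact Finset.card_eq_zero.1 (by omega)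
        have hIeq : I₁'.erase i₁ = I₂'.erase i₂ :=
          PS_eq_of_no_siblings hacyc hPSe1 hPSe2 hempty
        rw [Set.mem_iUnion₂]
        refine ⟨(FH holes baseHoles (I₁'.erase i₁), I₁'.erase i₁), ⟨hPSe1, rfl⟩, ?_⟩
        rw [newEdges, if_pos hFHe1]
        refine ⟨i₁, i₂, hpi₁, hpi₂, hne, ?_⟩
        rw [Prod.mk.injEq, Prod.mk.injEq, Prod.mk.injEq]
        refine ⟨by rw [← FH_insert, hins1], hins1.symm ▸ rfl, ?_, ?_⟩
        · rw [hIeq, ← FH_insert, hins2]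
        · rw [hIeq, hins2]
    · -- only the first side
      obtain ⟨i₁, hi₁, hpi₁⟩ := hc1
      push_neg at hc2
      obtain ⟨hPSe1, hFHe1, hInot1⟩ := PS_decomp htopo hj hPS1 hi₁ hpi₁
      obtain ⟨hPSj2, hnF2⟩ := PS_undecomp htopo hj hPS2 hc2
      have hins1 : insert i₁ (I₁'.erase i₁) = I₁' := Finset.insert_erase hi₁
      right
      rw [Set.mem_iUnion₂]
      refine ⟨(FH holes baseHoles (I₁'.erase i₁), I₁'.erase i₁,
        FH holes baseHoles I₂', I₂'), ⟨hPSe1, hPSj2, rfl, rfl, ?_⟩, ?_⟩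
      · have : siblings par I₁' I₂' = siblings par (I₁'.erase i₁) I₂' := by
          conv_lhs => rw [← hins1]
          exact siblings_insert_left (fun b hb => hpi₁ ▸ hc2 b hb)
        rw [← this]; exact hcard
      · rw [expandEdge, if_pos hFHe1, if_neg hnF2]
        refine ⟨i₁, hpi₁, ?_⟩
        rw [Prod.mk.injEq, Prod.mk.injEq, Prod.mk.injEq]
        exact ⟨by rw [← FH_insert, hins1], hins1.symm ▸ rfl, rfl, rfl⟩
    · -- only the second side
      push_neg at hc1
      obtain ⟨i₂, hi₂, hpi₂⟩ := hc2
      obtain ⟨hPSj1, hnF1⟩ := PS_undecomp htopo hj hPS1 hc1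
      obtain ⟨hPSe2, hFHe2, hInot2⟩ := PS_decomp htopo hj hPS2 hi₂ hpi₂
      have hins2 : insert i₂ (I₂'.erase i₂) = I₂' := Finset.insert_erase hi₂
      right
      rw [Set.mem_iUnion₂]
      refine ⟨(FH holes baseHoles I₁', I₁',
        FH holes baseHoles (I₂'.erase i₂), I₂'.erase i₂), ⟨hPSj1, hPSe2, rfl, rfl, ?_⟩, ?_⟩
      · have : siblings par I₁' I₂' = siblings par I₁' (I₂'.erase i₂) := by
          conv_lhs => rw [← hins2]
          exact siblings_insert_right (fun a ha => hpi₂ ▸ hc1 a ha)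
        rw [← this]; exact hcard
      · rw [expandEdge, if_neg hnF1, if_pos hFHe2]
        refine ⟨i₂, hpi₂, ?_⟩
        rw [Prod.mk.injEq, Prod.mk.injEq, Prod.mk.injEq]
        exact ⟨rfl, rfl, by rw [← FH_insert, hins2], hins2.symm ▸ rfl⟩
    · -- neither side
      push_neg at hc1 hc2
      obtain ⟨hPSj1, hnF1⟩ := PS_undecomp htopo hj hPS1 hc1
      obtain ⟨hPSj2, hnF2⟩ := PS_undecomp htopo hj hPS2 hc2
      right
      rw [Set.mem_iUnion₂]
      refine ⟨(FH holes baseHoles I₁', I₁', FH holes baseHoles I₂', I₂'),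
        ⟨hPSj1, hPSj2, rfl, rfl, hcard⟩, ?_⟩
      rw [expandEdge, if_neg hnF1, if_neg hnF2]
      rfl

lemma algo_inv (hacyc : Irreflexive (Relation.TransGen (MDG par holes baseHoles)))
    (htopo : TopoEnum par holes n Hs) :
    ∀ j, j ≤ n →
      (algo par holes baseHoles Hs j).1 = NodeSet par holes baseHoles Hs j ∧
      (algo par holes baseHoles Hs j).2 = EdgeSet par holes baseHoles Hs j := by
  intro j
  induction j with
  | zero =>
    intro _
    constructor
    · ext ⟨H, I⟩
      simp only [algo, Set.mem_singleton_iff, Prod.mk.injEq, NodeSet, Set.mem_setOf_eq]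
      constructor
      · rintro ⟨rfl, rfl⟩
        refine ⟨⟨by simp, by simp [siblings], by simp [pars, Hpre_zero]⟩, by simp [FH, holesOf]⟩
      · rintro ⟨⟨_, _, hpars⟩, rfl⟩
        rw [Hpre_zero, Finset.inter_empty] at hpars
        have : I = ∅ := Finset.image_eq_empty.1 hpars
        subst this
        exact ⟨by simp [FH, holesOf], rfl⟩
    · ext ⟨H₁, I₁, H₂, I₂⟩
      simp only [algo, Set.mem_empty_iff_false, false_iff, EdgeSet, Set.mem_setOf_eq]
      rintro ⟨⟨_, _, hpars1⟩, _, _, _, hcard⟩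
      rw [Hpre_zero, Finset.inter_empty] at hpars1
      have h1 : I₁ = ∅ := Finset.image_eq_empty.1 hpars1
      subst h1
      simp [siblings] at hcard
  | succ j ih =>
    intro hj
    obtain ⟨ihN, ihE⟩ := ih (by omega)
    constructor
    · show (expand par holes (algo par holes baseHoles Hs j) (Hs (j + 1))).1 = _
      rw [expand]
      simp only
      rw [ihN]
      exact node_step par holes baseHoles Hs htopo hj
    · show (expand par holes (algo par holes baseHoles Hs j) (Hs (j + 1))).2 = _
      rw [expand]
      simp only
      rw [ihN, ihE]
      exact edge_step par holes baseHoles Hs hacyc htopo hj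

lemma PS_n_iff (htopo : TopoEnum par holes n Hs) (I : Finset ι) :
    PS par holes baseHoles Hs n I ↔ ValidSelection par holes baseHoles I := by
  constructor
  · rintro ⟨_, hsib, hpars⟩
    refine ⟨?_, hsib⟩
    rw [hpars, Hpre_n_eq_univ htopo, Finset.inter_univ]
    rfl
  · rintro ⟨hpars, hsib⟩
    refine ⟨fun i _ => by rw [Hpre_n_eq_univ htopo]; exact Finset.mem_univ _, hsib, ?_⟩
    rw [Hpre_n_eq_univ htopo, Finset.inter_univ]
    exact hpars

end Invariant

end ModelGraphAux

/-- `E_n` is the correct and complete edge set: the final edge set produced by the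
model-graph algorithm is exactly the edge set of the model graph, namely the pairs of
valid selections with exactly one pair of siblings. -/
theorem algo_edges_correct {ι κ : Type*}
    [Fintype ι] [DecidableEq ι] [Fintype κ] [DecidableEq κ]
    (par : ι → κ) (holes : ι → Finset κ) (baseHoles : Finset κ)
    (hvalid : StructValid par holes baseHoles)
    (n : ℕ) (Hs : ℕ → κ) (htopo : TopoEnum par holes n Hs) :
    {p : Finset ι × Finset ι | ∃ (H₁ H₂ : Finset κ),
        (H₁, p.1, H₂, p.2) ∈ (algo par holes baseHoles Hs n).2} =
    {p : Finset ι × Finset ι |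
        ValidSelection par holes baseHoles p.1 ∧ ValidSelection par holes baseHoles p.2 ∧
        (siblings par p.1 p.2).card = 1} := by
  have hE := (ModelGraphAux.algo_inv par holes baseHoles Hs hvalid.1 htopo n le_rfl).2
  ext ⟨I₁, I₂⟩
  simp only [Set.mem_setOf_eq, hE]
  constructor
  · rintro ⟨H₁, H₂, hPS1, hPS2, _, _, hcard⟩
    exact ⟨(ModelGraphAux.PS_n_iff par holes baseHoles Hs htopo I₁).1 hPS1,
      (ModelGraphAux.PS_n_iff par holes baseHoles Hs htopo I₂).1 hPS2, hcard⟩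
  · rintro ⟨hV1, hV2, hcard⟩
    exact ⟨ModelGraphAux.FH holes baseHoles I₁, ModelGraphAux.FH holes baseHoles I₂,
      (ModelGraphAux.PS_n_iff par holes baseHoles Hs htopo I₁).2 hV1,
      (ModelGraphAux.PS_n_iff par holes baseHoles Hs htopo I₂).2 hV2, rfl, rfl, hcard⟩
end
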